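/- arXiv:2302.12955 — 8 statements merged into one kernel-verified Lean document; each statement's English description precedes it below -/
import Mathlib

section
/- For every r = (r12, r13, r14, r23, r24, r34) ∈ ℝ⁶ the polynomial identity 2·H(r) = F(r)·Q(r) − K(r)² holds. -/
noncomputable section

/-- `F` as a function of the vector of mutual distances
`r = (r12, r13, r14, r23, r24, r34)` (indexed `0,…,5`). -/
def F (r : Fin 6 → ℝ) : ℝ :=
  2 * r 0 * r 5 - (r 1) ^ 2 - (r 4) ^ 2 + (r 3) ^ 2 + (r 2) ^ 2

/-- `K` as a function of the mutual distances. -/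
def K (r : Fin 6 → ℝ) : ℝ :=
  r 0 * ((r 1) ^ 2 - (r 2) ^ 2 + (r 3) ^ 2 - (r 4) ^ 2) +
    r 5 * (-(r 1) ^ 2 - (r 2) ^ 2 + (r 3) ^ 2 + (r 4) ^ 2)

/-- `Q` as a function of the mutual distances. -/
def Q (r : Fin 6 → ℝ) : ℝ :=
  -((r 0) ^ 2 * (r 1) ^ 2 - (r 0) ^ 2 * (r 2) ^ 2 - (r 0) ^ 2 * (r 3) ^ 2
      + 4 * (r 2) ^ 2 * (r 3) ^ 2 + (r 0) ^ 2 * (r 4) ^ 2 - 4 * (r 1) ^ 2 * (r 4) ^ 2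
      + 2 * (r 0) ^ 3 * r 5 - 2 * r 0 * (r 1) ^ 2 * r 5 - 2 * r 0 * (r 2) ^ 2 * r 5
      - 2 * r 0 * (r 3) ^ 2 * r 5 - 2 * r 0 * (r 4) ^ 2 * r 5 + (r 1) ^ 2 * (r 5) ^ 2
      - (r 2) ^ 2 * (r 5) ^ 2 - (r 3) ^ 2 * (r 5) ^ 2 + (r 4) ^ 2 * (r 5) ^ 2
      + 2 * r 0 * (r 5) ^ 3)

/-- The Cayley–Menger determinant of the mutual distances. -/
def H (r : Fin 6 → ℝ) : ℝ :=
  Matrix.det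
    !![0, 1, 1, 1, 1;
       1, 0, (r 0) ^ 2, (r 1) ^ 2, (r 2) ^ 2;
       1, (r 0) ^ 2, 0, (r 3) ^ 2, (r 4) ^ 2;
       1, (r 1) ^ 2, (r 3) ^ 2, 0, (r 5) ^ 2;
       1, (r 2) ^ 2, (r 4) ^ 2, (r 5) ^ 2, 0]

open Matrix Finset in
theorem mydet_fin_four {R : Type*} [CommRing R] (A : Matrix (Fin 4) (Fin 4) R) :
    det A =
      A 0 0 * (A 1 1 * A 2 2 * A 3 3 - A 1 1 * A 2 3 * A 3 2 - A 1 2 * A 2 1 * A 3 3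
        + A 1 2 * A 2 3 * A 3 1 + A 1 3 * A 2 1 * A 3 2 - A 1 3 * A 2 2 * A 3 1)
      - A 0 1 * (A 1 0 * A 2 2 * A 3 3 - A 1 0 * A 2 3 * A 3 2 - A 1 2 * A 2 0 * A 3 3
        + A 1 2 * A 2 3 * A 3 0 + A 1 3 * A 2 0 * A 3 2 - A 1 3 * A 2 2 * A 3 0)
      + A 0 2 * (A 1 0 * A 2 1 * A 3 3 - A 1 0 * A 2 3 * A 3 1 - A 1 1 * A 2 0 * A 3 3
        + A 1 1 * A 2 3 * A 3 0 + A 1 3 * A 2 0 * A 3 1 - A 1 3 * A 2 1 * A 3 0)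
      - A 0 3 * (A 1 0 * A 2 1 * A 3 2 - A 1 0 * A 2 2 * A 3 1 - A 1 1 * A 2 0 * A 3 2
        + A 1 1 * A 2 2 * A 3 0 + A 1 2 * A 2 0 * A 3 1 - A 1 2 * A 2 1 * A 3 0) := by
  rw [det_succ_row_zero]
  simp only [Fin.sum_univ_succ, Finset.univ_eq_empty, Finset.sum_empty, det_fin_three,
    submatrix_apply]
  norm_num [Fin.succAbove, Fin.lt_def, Fin.ext_iff]
  simp only [show (Fin.succ 2 : Fin 4) = 3 from rfl, show (Fin.castSucc 2 : Fin 4) = 2 from rfl]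
  ring

set_option maxHeartbeats 2000000 in
open Matrix Finset in
theorem mydet_fin_five {R : Type*} [CommRing R] (A : Matrix (Fin 5) (Fin 5) R) :
    det A = 0 + A 0 0*A 1 1*A 2 2*A 3 3*A 4 4
      - A 0 0*A 1 1*A 2 2*A 3 4*A 4 3
      - A 0 0*A 1 1*A 2 3*A 3 2*A 4 4
      + A 0 0*A 1 1*A 2 3*A 3 4*A 4 2
      + A 0 0*A 1 1*A 2 4*A 3 2*A 4 3
      - A 0 0*A 1 1*A 2 4*A 3 3*A 4 2
      - A 0 0*A 1 2*A 2 1*A 3 3*A 4 4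
      + A 0 0*A 1 2*A 2 1*A 3 4*A 4 3
      + A 0 0*A 1 2*A 2 3*A 3 1*A 4 4
      - A 0 0*A 1 2*A 2 3*A 3 4*A 4 1
      - A 0 0*A 1 2*A 2 4*A 3 1*A 4 3
      + A 0 0*A 1 2*A 2 4*A 3 3*A 4 1
      + A 0 0*A 1 3*A 2 1*A 3 2*A 4 4
      - A 0 0*A 1 3*A 2 1*A 3 4*A 4 2
      - A 0 0*A 1 3*A 2 2*A 3 1*A 4 4
      + A 0 0*A 1 3*A 2 2*A 3 4*A 4 1
      + A 0 0*A 1 3*A 2 4*A 3 1*A 4 2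
      - A 0 0*A 1 3*A 2 4*A 3 2*A 4 1
      - A 0 0*A 1 4*A 2 1*A 3 2*A 4 3
      + A 0 0*A 1 4*A 2 1*A 3 3*A 4 2
      + A 0 0*A 1 4*A 2 2*A 3 1*A 4 3
      - A 0 0*A 1 4*A 2 2*A 3 3*A 4 1
      - A 0 0*A 1 4*A 2 3*A 3 1*A 4 2
      + A 0 0*A 1 4*A 2 3*A 3 2*A 4 1
      - A 0 1*A 1 0*A 2 2*A 3 3*A 4 4
      + A 0 1*A 1 0*A 2 2*A 3 4*A 4 3
      + A 0 1*A 1 0*A 2 3*A 3 2*A 4 4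
      - A 0 1*A 1 0*A 2 3*A 3 4*A 4 2
      - A 0 1*A 1 0*A 2 4*A 3 2*A 4 3
      + A 0 1*A 1 0*A 2 4*A 3 3*A 4 2
      + A 0 1*A 1 2*A 2 0*A 3 3*A 4 4
      - A 0 1*A 1 2*A 2 0*A 3 4*A 4 3
      - A 0 1*A 1 2*A 2 3*A 3 0*A 4 4
      + A 0 1*A 1 2*A 2 3*A 3 4*A 4 0
      + A 0 1*A 1 2*A 2 4*A 3 0*A 4 3
      - A 0 1*A 1 2*A 2 4*A 3 3*A 4 0
      - A 0 1*A 1 3*A 2 0*A 3 2*A 4 4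
      + A 0 1*A 1 3*A 2 0*A 3 4*A 4 2
      + A 0 1*A 1 3*A 2 2*A 3 0*A 4 4
      - A 0 1*A 1 3*A 2 2*A 3 4*A 4 0
      - A 0 1*A 1 3*A 2 4*A 3 0*A 4 2
      + A 0 1*A 1 3*A 2 4*A 3 2*A 4 0
      + A 0 1*A 1 4*A 2 0*A 3 2*A 4 3
      - A 0 1*A 1 4*A 2 0*A 3 3*A 4 2
      - A 0 1*A 1 4*A 2 2*A 3 0*A 4 3
      + A 0 1*A 1 4*A 2 2*A 3 3*A 4 0
      + A 0 1*A 1 4*A 2 3*A 3 0*A 4 2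
      - A 0 1*A 1 4*A 2 3*A 3 2*A 4 0
      + A 0 2*A 1 0*A 2 1*A 3 3*A 4 4
      - A 0 2*A 1 0*A 2 1*A 3 4*A 4 3
      - A 0 2*A 1 0*A 2 3*A 3 1*A 4 4
      + A 0 2*A 1 0*A 2 3*A 3 4*A 4 1
      + A 0 2*A 1 0*A 2 4*A 3 1*A 4 3
      - A 0 2*A 1 0*A 2 4*A 3 3*A 4 1
      - A 0 2*A 1 1*A 2 0*A 3 3*A 4 4
      + A 0 2*A 1 1*A 2 0*A 3 4*A 4 3
      + A 0 2*A 1 1*A 2 3*A 3 0*A 4 4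
      - A 0 2*A 1 1*A 2 3*A 3 4*A 4 0
      - A 0 2*A 1 1*A 2 4*A 3 0*A 4 3
      + A 0 2*A 1 1*A 2 4*A 3 3*A 4 0
      + A 0 2*A 1 3*A 2 0*A 3 1*A 4 4
      - A 0 2*A 1 3*A 2 0*A 3 4*A 4 1
      - A 0 2*A 1 3*A 2 1*A 3 0*A 4 4
      + A 0 2*A 1 3*A 2 1*A 3 4*A 4 0
      + A 0 2*A 1 3*A 2 4*A 3 0*A 4 1
      - A 0 2*A 1 3*A 2 4*A 3 1*A 4 0
      - A 0 2*A 1 4*A 2 0*A 3 1*A 4 3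
      + A 0 2*A 1 4*A 2 0*A 3 3*A 4 1
      + A 0 2*A 1 4*A 2 1*A 3 0*A 4 3
      - A 0 2*A 1 4*A 2 1*A 3 3*A 4 0
      - A 0 2*A 1 4*A 2 3*A 3 0*A 4 1
      + A 0 2*A 1 4*A 2 3*A 3 1*A 4 0
      - A 0 3*A 1 0*A 2 1*A 3 2*A 4 4
      + A 0 3*A 1 0*A 2 1*A 3 4*A 4 2
      + A 0 3*A 1 0*A 2 2*A 3 1*A 4 4
      - A 0 3*A 1 0*A 2 2*A 3 4*A 4 1
      - A 0 3*A 1 0*A 2 4*A 3 1*A 4 2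
      + A 0 3*A 1 0*A 2 4*A 3 2*A 4 1
      + A 0 3*A 1 1*A 2 0*A 3 2*A 4 4
      - A 0 3*A 1 1*A 2 0*A 3 4*A 4 2
      - A 0 3*A 1 1*A 2 2*A 3 0*A 4 4
      + A 0 3*A 1 1*A 2 2*A 3 4*A 4 0
      + A 0 3*A 1 1*A 2 4*A 3 0*A 4 2
      - A 0 3*A 1 1*A 2 4*A 3 2*A 4 0
      - A 0 3*A 1 2*A 2 0*A 3 1*A 4 4
      + A 0 3*A 1 2*A 2 0*A 3 4*A 4 1
      + A 0 3*A 1 2*A 2 1*A 3 0*A 4 4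
      - A 0 3*A 1 2*A 2 1*A 3 4*A 4 0
      - A 0 3*A 1 2*A 2 4*A 3 0*A 4 1
      + A 0 3*A 1 2*A 2 4*A 3 1*A 4 0
      + A 0 3*A 1 4*A 2 0*A 3 1*A 4 2
      - A 0 3*A 1 4*A 2 0*A 3 2*A 4 1
      - A 0 3*A 1 4*A 2 1*A 3 0*A 4 2
      + A 0 3*A 1 4*A 2 1*A 3 2*A 4 0
      + A 0 3*A 1 4*A 2 2*A 3 0*A 4 1
      - A 0 3*A 1 4*A 2 2*A 3 1*A 4 0
      + A 0 4*A 1 0*A 2 1*A 3 2*A 4 3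
      - A 0 4*A 1 0*A 2 1*A 3 3*A 4 2
      - A 0 4*A 1 0*A 2 2*A 3 1*A 4 3
      + A 0 4*A 1 0*A 2 2*A 3 3*A 4 1
      + A 0 4*A 1 0*A 2 3*A 3 1*A 4 2
      - A 0 4*A 1 0*A 2 3*A 3 2*A 4 1
      - A 0 4*A 1 1*A 2 0*A 3 2*A 4 3
      + A 0 4*A 1 1*A 2 0*A 3 3*A 4 2
      + A 0 4*A 1 1*A 2 2*A 3 0*A 4 3
      - A 0 4*A 1 1*A 2 2*A 3 3*A 4 0
      - A 0 4*A 1 1*A 2 3*A 3 0*A 4 2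
      + A 0 4*A 1 1*A 2 3*A 3 2*A 4 0
      + A 0 4*A 1 2*A 2 0*A 3 1*A 4 3
      - A 0 4*A 1 2*A 2 0*A 3 3*A 4 1
      - A 0 4*A 1 2*A 2 1*A 3 0*A 4 3
      + A 0 4*A 1 2*A 2 1*A 3 3*A 4 0
      + A 0 4*A 1 2*A 2 3*A 3 0*A 4 1
      - A 0 4*A 1 2*A 2 3*A 3 1*A 4 0
      - A 0 4*A 1 3*A 2 0*A 3 1*A 4 2
      + A 0 4*A 1 3*A 2 0*A 3 2*A 4 1
      + A 0 4*A 1 3*A 2 1*A 3 0*A 4 2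
      - A 0 4*A 1 3*A 2 1*A 3 2*A 4 0
      - A 0 4*A 1 3*A 2 2*A 3 0*A 4 1
      + A 0 4*A 1 3*A 2 2*A 3 1*A 4 0 := by
  rw [det_succ_row_zero]
  simp only [Fin.sum_univ_succ, Finset.univ_eq_empty, Finset.sum_empty, mydet_fin_four,
    submatrix_apply]
  simp (config := { decide := true }) only [Fin.succAbove, Fin.lt_def, Fin.val_succ,
    Fin.coe_castSucc, Fin.val_zero, Fin.val_one, if_true, if_false]
  simp only [show (Fin.succ 3 : Fin 5) = 4 from rfl, show (Fin.succ 2 : Fin 5) = 3 from rfl,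
    show (Fin.succ 1 : Fin 5) = 2 from rfl, show (Fin.succ 0 : Fin 5) = 1 from rfl,
    show ((Fin.succ 2).succ : Fin 5) = 4 from rfl, show (Fin.castSucc 0 : Fin 5) = 0 from rfl,
    show (Fin.castSucc 1 : Fin 5) = 1 from rfl, show (Fin.castSucc 2 : Fin 5) = 2 from rfl,
    show (Fin.castSucc 3 : Fin 5) = 3 from rfl, show ((Fin.succ 1).succ : Fin 5) = 3 from rfl,
    show ((Fin.succ 0).succ : Fin 5) = 2 from rfl,
    show (((Fin.succ 1).succ).succ : Fin 5) = 4 from rfl,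
    show (((Fin.succ 0).succ).succ : Fin 5) = 3 from rfl,
    show ((((Fin.succ 0).succ).succ).succ : Fin 5) = 4 from rfl]
  ring

set_option maxHeartbeats 1000000 in
/-- For every vector of mutual distances `r ∈ ℝ⁶`, the polynomial identity
`2·H(r) = F(r)·Q(r) − K(r)²` holds. -/
theorem two_H_eq_F_mul_Q_sub_K_sq (r : Fin 6 → ℝ) :
    2 * H r = F r * Q r - (K r) ^ 2 := by
  simp only [H, F, K, Q, mydet_fin_five, Matrix.cons_val', Matrix.cons_val_zero,
    Matrix.cons_val_one, Matrix.head_cons, Matrix.empty_val', Matrix.cons_val_fin_one,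
    Matrix.head_fin_const, Matrix.cons_val_succ, Matrix.of_apply,
    show (2 : Fin 5) = Fin.succ 1 from rfl, show (3 : Fin 5) = Fin.succ 2 from rfl,
    show (4 : Fin 5) = Fin.succ 3 from rfl, show (2 : Fin 4) = Fin.succ 1 from rfl,
    show (3 : Fin 4) = Fin.succ 2 from rfl, show (2 : Fin 3) = Fin.succ 1 from rfl]
  ring
end
end

section
/- If r ∈ ℝ⁶ satisfies H(r) ≥ 0 and F(r) = 0, then H(r) = 0 and K(r) = 0. (In particular, on the set of geometrically realizable distance vectors where F vanishes, the configuration of four bodies is coplanar.) -/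
noncomputable section

set_option maxHeartbeats 4000000

/-- If `H(r) ≥ 0` and `F(r) = 0`, then `H(r) = 0` and `K(r) = 0`: on the set of
geometrically realizable distance vectors where `F` vanishes, the configuration
of four bodies is coplanar. -/

theorem H_eq_zero_of_F_eq_zero (r : Fin 6 → ℝ) (hH : 0 ≤ H r) (hF : F r = 0) :
    H r = 0 ∧ K r = 0 := by
  have key : 2 * H r = -(K r) ^ 2 + F r *
      (-(r 4)^2*(r 5)^2 + (r 3)^2*(r 5)^2 + (r 2)^2*(r 5)^2 - 4*(r 2)^2*(r 3)^2
        - (r 1)^2*(r 5)^2 + 4*(r 1)^2*(r 4)^2 - 2*(r 0)*(r 5)^3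
        + 2*(r 0)*(r 4)^2*(r 5) + 2*(r 0)*(r 3)^2*(r 5) + 2*(r 0)*(r 2)^2*(r 5)
        + 2*(r 0)*(r 1)^2*(r 5) - (r 0)^2*(r 4)^2 + (r 0)^2*(r 3)^2
        + (r 0)^2*(r 2)^2 - (r 0)^2*(r 1)^2 - 2*(r 0)^3*(r 5)) := by
    unfold H K F
    simp +decide [Matrix.det_succ_row_zero, Fin.sum_univ_succ, Fin.succAbove]
    ring
  rw [hF, zero_mul, add_zero] at key
  have hK : K r = 0 := by nlinarith [sq_nonneg (K r)]
  constructor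
  · nlinarith [hK]
  · exact hK
end
end

section
/- If r ∈ ℝ⁶ satisfies F(r) = 0 and K(r) = 0, then the gradients of H and F at r are parallel; precisely, ∇H(r) = (1/2)·Q(r)·∇F(r), where ∇ denotes the gradient with respect to the six coordinates r12, r13, r14, r23, r24, r34. -/
noncomputable section

private lemma sa_2_0_0 : Fin.succAbove (0 : Fin 3) (0 : Fin 2) = 1 := rfl
private lemma sa_2_0_1 : Fin.succAbove (0 : Fin 3) (1 : Fin 2) = 2 := rfl
private lemma sa_2_1_0 : Fin.succAbove (1 : Fin 3) (0 : Fin 2) = 0 := rfl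
private lemma sa_2_1_1 : Fin.succAbove (1 : Fin 3) (1 : Fin 2) = 2 := rfl
private lemma sa_2_2_0 : Fin.succAbove (2 : Fin 3) (0 : Fin 2) = 0 := rfl
private lemma sa_2_2_1 : Fin.succAbove (2 : Fin 3) (1 : Fin 2) = 1 := rfl
private lemma sa_3_0_0 : Fin.succAbove (0 : Fin 4) (0 : Fin 3) = 1 := rfl
private lemma sa_3_0_1 : Fin.succAbove (0 : Fin 4) (1 : Fin 3) = 2 := rfl
private lemma sa_3_0_2 : Fin.succAbove (0 : Fin 4) (2 : Fin 3) = 3 := rfl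
private lemma sa_3_1_0 : Fin.succAbove (1 : Fin 4) (0 : Fin 3) = 0 := rfl
private lemma sa_3_1_1 : Fin.succAbove (1 : Fin 4) (1 : Fin 3) = 2 := rfl
private lemma sa_3_1_2 : Fin.succAbove (1 : Fin 4) (2 : Fin 3) = 3 := rfl
private lemma sa_3_2_0 : Fin.succAbove (2 : Fin 4) (0 : Fin 3) = 0 := rfl
private lemma sa_3_2_1 : Fin.succAbove (2 : Fin 4) (1 : Fin 3) = 1 := rfl
private lemma sa_3_2_2 : Fin.succAbove (2 : Fin 4) (2 : Fin 3) = 3 := rfl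
private lemma sa_3_3_0 : Fin.succAbove (3 : Fin 4) (0 : Fin 3) = 0 := rfl
private lemma sa_3_3_1 : Fin.succAbove (3 : Fin 4) (1 : Fin 3) = 1 := rfl
private lemma sa_3_3_2 : Fin.succAbove (3 : Fin 4) (2 : Fin 3) = 2 := rfl
private lemma sa_4_0_0 : Fin.succAbove (0 : Fin 5) (0 : Fin 4) = 1 := rfl
private lemma sa_4_0_1 : Fin.succAbove (0 : Fin 5) (1 : Fin 4) = 2 := rfl
private lemma sa_4_0_2 : Fin.succAbove (0 : Fin 5) (2 : Fin 4) = 3 := rfl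
private lemma sa_4_0_3 : Fin.succAbove (0 : Fin 5) (3 : Fin 4) = 4 := rfl
private lemma sa_4_1_0 : Fin.succAbove (1 : Fin 5) (0 : Fin 4) = 0 := rfl
private lemma sa_4_1_1 : Fin.succAbove (1 : Fin 5) (1 : Fin 4) = 2 := rfl
private lemma sa_4_1_2 : Fin.succAbove (1 : Fin 5) (2 : Fin 4) = 3 := rfl
private lemma sa_4_1_3 : Fin.succAbove (1 : Fin 5) (3 : Fin 4) = 4 := rfl
private lemma sa_4_2_0 : Fin.succAbove (2 : Fin 5) (0 : Fin 4) = 0 := rfl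
private lemma sa_4_2_1 : Fin.succAbove (2 : Fin 5) (1 : Fin 4) = 1 := rfl
private lemma sa_4_2_2 : Fin.succAbove (2 : Fin 5) (2 : Fin 4) = 3 := rfl
private lemma sa_4_2_3 : Fin.succAbove (2 : Fin 5) (3 : Fin 4) = 4 := rfl
private lemma sa_4_3_0 : Fin.succAbove (3 : Fin 5) (0 : Fin 4) = 0 := rfl
private lemma sa_4_3_1 : Fin.succAbove (3 : Fin 5) (1 : Fin 4) = 1 := rfl
private lemma sa_4_3_2 : Fin.succAbove (3 : Fin 5) (2 : Fin 4) = 2 := rfl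
private lemma sa_4_3_3 : Fin.succAbove (3 : Fin 5) (3 : Fin 4) = 4 := rfl
private lemma sa_4_4_0 : Fin.succAbove (4 : Fin 5) (0 : Fin 4) = 0 := rfl
private lemma sa_4_4_1 : Fin.succAbove (4 : Fin 5) (1 : Fin 4) = 1 := rfl
private lemma sa_4_4_2 : Fin.succAbove (4 : Fin 5) (2 : Fin 4) = 2 := rfl
private lemma sa_4_4_3 : Fin.succAbove (4 : Fin 5) (3 : Fin 4) = 3 := rfl
private lemma sc_3_2 : Fin.succ (2 : Fin 3) = 3 := rfl
private lemma sc_4_2 : Fin.succ (2 : Fin 4) = 3 := rfl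
private lemma sc_4_3 : Fin.succ (3 : Fin 4) = 4 := rfl
private lemma sc_5_2 : Fin.succ (2 : Fin 5) = 3 := rfl
private lemma sc_5_3 : Fin.succ (3 : Fin 5) = 4 := rfl
private lemma sc_5_4 : Fin.succ (4 : Fin 5) = 5 := rfl

set_option maxHeartbeats 4000000 in
/-- If `F(r) = 0` and `K(r) = 0`, then the gradients of `H` and `F` at `r` are
parallel: `∇H(r) = (1/2)·Q(r)·∇F(r)`. -/
theorem grad_H_eq_half_Q_smul_grad_F (r : Fin 6 → ℝ) (hF : F r = 0) (hK : K r = 0) :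
    fderiv ℝ H r = ((1 / 2) * Q r) • fderiv ℝ F r := by
  have h0 := hasFDerivAt_apply (𝕜 := ℝ) (0 : Fin 6) r
  have h1 := hasFDerivAt_apply (𝕜 := ℝ) (1 : Fin 6) r
  have h2 := hasFDerivAt_apply (𝕜 := ℝ) (2 : Fin 6) r
  have h3 := hasFDerivAt_apply (𝕜 := ℝ) (3 : Fin 6) r
  have h4 := hasFDerivAt_apply (𝕜 := ℝ) (4 : Fin 6) r
  have h5 := hasFDerivAt_apply (𝕜 := ℝ) (5 : Fin 6) r
  have hHd := (((((((((((((((((((((((((((h3.mul h3).mul h4).mul h4).mul h5).mul h5).const_mul (-2 : ℝ)).add ((((((h2.mul h2).mul h3).mul h3).mul h5).mul h5).const_mul (2 : ℝ))).add ((((((h2.mul h2).mul h3).mul h3).mul h4).mul h4).const_mul (2 : ℝ))).add ((((((h2.mul h2).mul h3).mul h3).mul h3).mul h3).const_mul (-2 : ℝ))).add ((((((h2.mul h2).mul h2).mul h2).mul h3).mul h3).const_mul (-2 : ℝ))).add ((((((h1.mul h1).mul h4).mul h4).mul h5).mul h5).const_mul (2 : ℝ))).add ((((((h1.mul h1).mul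 h4).mul h4).mul h4).mul h4).const_mul (-2 : ℝ))).add ((((((h1.mul h1).mul h3).mul h3).mul h4).mul h4).const_mul (2 : ℝ))).add ((((((h1.mul h1).mul h2).mul h2).mul h5).mul h5).const_mul (-2 : ℝ))).add ((((((h1.mul h1).mul h2).mul h2).mul h4).mul h4).const_mul (2 : ℝ))).add ((((((h1.mul h1).mul h2).mul h2).mul h3).mul h3).const_mul (2 : ℝ))).add ((((((h1.mul h1).mul h1).mul h1).mul h4).mul h4).const_mul (-2 : ℝ))).add ((((((h0.mul h0).mul h5).mul h5).mul h5).mul h5).const_mul (-2 : ℝ))).add ((((((h0.mul h0).mul h4).mul h4).mul h5).mul h5).const_mul (2 : ℝ))).add ((((((h0.mul h0).mul h3).mul h3).mul h5).mul h5).const_mul (2 : ℝ))).add ((((((h0.mul h0).mul h2).mul h2).mul h5).mul h5).const_mul (2 : ℝ))).add ((((((h0.mul h0).mul h2).mul h2).mul h4).mul h4).const_mul (-2 : ℝ))).add ((((((h0.mul h0).mul h2).mul h2).mul h3).mul h3).const_mul (2 : ℝ))).add ((((((h0.mul h0).mul h1).mul h1).mul h5).mul h5).const_mul (2 : ℝ))).add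 ((((((h0.mul h0).mul h1).mul h1).mul h4).mul h4).const_mul (2 : ℝ))).add ((((((h0.mul h0).mul h1).mul h1).mul h3).mul h3).const_mul (-2 : ℝ))).add ((((((h0.mul h0).mul h0).mul h0).mul h5).mul h5).const_mul (-2 : ℝ)))
  have hFd := ((((((h4.mul h4).const_mul (-1 : ℝ)).add ((h3.mul h3).const_mul (1 : ℝ))).add ((h2.mul h2).const_mul (1 : ℝ))).add ((h1.mul h1).const_mul (-1 : ℝ))).add ((h0.mul h5).const_mul (2 : ℝ)))
  have hH := hHd.congr_of_eventuallyEq (f₁ := H)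
    (Filter.Eventually.of_forall fun v => by
      show H v = _
      simp only [Pi.add_apply, Pi.mul_apply, Pi.pow_apply, Pi.neg_apply, H, Matrix.det_succ_row_zero, Fin.sum_univ_succ, Matrix.submatrix_apply,
        Fin.succ_zero_eq_one, Fin.succ_one_eq_two, Fin.zero_succAbove, Fin.succ_succAbove_zero,
        Fin.succ_succAbove_one, Fin.succ_succAbove_succ, Matrix.submatrix_submatrix,
        Function.comp_apply, Matrix.det_unique, Fin.default_eq_zero, Fin.val_zero, Fin.val_succ,
        Fin.val_eq_zero, Finset.univ_unique, Finset.sum_singleton, Fin.sum_univ_zero,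
        Matrix.cons_val', Matrix.cons_val_zero, Matrix.cons_val_one, Matrix.head_cons,
        Matrix.head_fin_const, Matrix.empty_val', Matrix.cons_val_fin_one,
        pow_succ, pow_zero, one_mul, Matrix.cons_val_two, Matrix.cons_val_three,
        Matrix.cons_val_four, Matrix.vecHead, Matrix.vecTail, Matrix.cons_val_succ,
        Matrix.of_apply, sa_2_0_0, sa_2_0_1, sa_2_1_0, sa_2_1_1, sa_2_2_0, sa_2_2_1, sa_3_0_0, sa_3_0_1, sa_3_0_2, sa_3_1_0, sa_3_1_1, sa_3_1_2, sa_3_2_0, sa_3_2_1, sa_3_2_2, sa_3_3_0, sa_3_3_1, sa_3_3_2, sa_4_0_0, sa_4_0_1, sa_4_0_2, sa_4_0_3, sa_4_1_0, sa_4_1_1, sa_4_1_2, sa_4_1_3, sa_4_2_0, sa_4_2_1, sa_4_2_2, sa_4_2_3, sa_4_3_0, sa_4_3_1, sa_4_3_2, sa_4_3_3, sa_4_4_0, sa_4_4_1, sa_4_4_2, sa_4_4_3, sc_3_2, sc_4_2, sc_4_3, sc_5_2, sc_5_3, sc_5_4]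
      ring)
  have hFc := hFd.congr_of_eventuallyEq (f₁ := F)
    (Filter.Eventually.of_forall fun v => by show F v = _; simp only [Pi.add_apply, Pi.mul_apply, Pi.pow_apply, Pi.neg_apply, F]; ring)
  rw [hH.fderiv, hFc.fderiv]
  refine ContinuousLinearMap.ext fun v => ?_
  simp only [F, K] at hF hK
  simp only [Q, ContinuousLinearMap.add_apply, ContinuousLinearMap.coe_smul',
    ContinuousLinearMap.smul_apply, ContinuousLinearMap.proj_apply, Pi.smul_apply,
    smul_eq_mul, Pi.mul_apply]
  linear_combination (v 0 * ((-1) * r 5 * r 5 * r 5 + (1) * r 4 * r 4 * r 5 + (1) * r 3 * r 3 * r 5 + (1) * r 2 * r 2 * r 5 + (1) * r 1 * r 1 * r 5 + (-1) * r 0 * r 4 * r 4 + (1) * r 0 * r 3 * r 3 + (1) * r 0 * r 2 * r 2 + (-1) * r 0 * r 1 * r 1 + (-3) * r 0 * r 0 * r 5) + v 1 * ((-1) * r 1 * r 5 * r 5 + (4) * r 1 * r 4 * r 4 + (2) * r 0 * r 1 * r 5 + (-1) * r 0 * r 0 * r 1) + v 2 * ((1) * r 2 * r 5 * r 5 + (-4)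 * r 2 * r 3 * r 3 + (2) * r 0 * r 2 * r 5 + (1) * r 0 * r 0 * r 2) + v 3 * ((1) * r 3 * r 5 * r 5 + (-4) * r 2 * r 2 * r 3 + (2) * r 0 * r 3 * r 5 + (1) * r 0 * r 0 * r 3) + v 4 * ((-1) * r 4 * r 5 * r 5 + (4) * r 1 * r 1 * r 4 + (2) * r 0 * r 4 * r 5 + (-1) * r 0 * r 0 * r 4) + v 5 * ((-1) * r 4 * r 4 * r 5 + (1) * r 3 * r 3 * r 5 + (1) * r 2 * r 2 * r 5 + (-1) * r 1 * r 1 * r 5 + (-3) * r 0 * r 5 * r 5 + (1) * r 0 * r 4 * r 4 + (1) * r 0 * r 3 * r 3 + (1) * r 0 * r 2 * r 2 + (1) * r 0 * r 1 * r 1 + (-1) * r 0 * r 0 * r 0)) * hF + (v 0 * ((1) * r 4 * r 4 + (-1) * r 3 * r 3 + (1) * r 2 * r 2 + (-1) * r 1 * r 1) + v 1 * ((2) * r 1 * r 5 + (-2) * r 0 * r 1) + v 2 * ((2) * r 2 * r 5 + (2) * r 0 * r 2) + v 3 * ((-2) * r 3 * r 5 + (-2) * r 0 * r 3) + v 4 *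 ((-2) * r 4 * r 5 + (2) * r 0 * r 4) + v 5 * ((-1) * r 4 * r 4 + (-1) * r 3 * r 3 + (1) * r 2 * r 2 + (1) * r 1 * r 1)) * hK
end
end

section
/- Let m1, m2, m3, m4 > 0 and let r ∈ ℝ⁶ have all six coordinates positive. If real numbers λ and σ satisfy the six Dziobek–trapezoid equations m1 m2 (r12⁻³ − λ) = 2σ r34/r12, m3 m4 (r34⁻³ − λ) = 2σ r12/r34, m1 m3 (r13⁻³ − λ) = −2σ, m2 m4 (r24⁻³ − λ) = −2σ, m1 m4 (r14⁻³ − λ) = 2σ, m2 m3 (r23⁻³ − λ) = 2σ, then λ > 0. -/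
noncomputable section

/-- If positive masses and a positive distance vector
`r = (r12, r13, r14, r23, r24, r34)` (indexed `0,…,5`) satisfy the six
Dziobek–trapezoid equations with multipliers `λ` and `σ`, then `λ > 0`. -/
theorem lambda_pos (m1 m2 m3 m4 : ℝ) (hm1 : 0 < m1) (hm2 : 0 < m2) (hm3 : 0 < m3)
    (hm4 : 0 < m4) (r : Fin 6 → ℝ) (hr : ∀ i, 0 < r i) (lam sigma : ℝ)
    (h12 : m1 * m2 * ((r 0) ^ (-3 : ℤ) - lam) = 2 * sigma * r 5 / r 0)
    (h34 : m3 * m4 * ((r 5) ^ (-3 : ℤ) - lam) = 2 * sigma * r 0 / r 5)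
    (h13 : m1 * m3 * ((r 1) ^ (-3 : ℤ) - lam) = -(2 * sigma))
    (h24 : m2 * m4 * ((r 4) ^ (-3 : ℤ) - lam) = -(2 * sigma))
    (h14 : m1 * m4 * ((r 2) ^ (-3 : ℤ) - lam) = 2 * sigma)
    (h23 : m2 * m3 * ((r 3) ^ (-3 : ℤ) - lam) = 2 * sigma) :
    0 < lam := by
  by_contra h
  push_neg at h
  have h1 : (0:ℝ) < (r 1) ^ (-3 : ℤ) := zpow_pos (hr 1) _
  have h2 : (0:ℝ) < (r 2) ^ (-3 : ℤ) := zpow_pos (hr 2) _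
  nlinarith [mul_pos hm1 hm3, mul_pos hm1 hm4]
end
end

section
/- Let m1, m2, m3, m4 > 0 and let r ∈ ℝ⁶ have all six coordinates positive. Suppose real numbers λ and σ satisfy the six equations m1 m2 (r12⁻³ − λ) = 2σ r34/r12, m3 m4 (r34⁻³ − λ) = 2σ r12/r34, m1 m3 (r13⁻³ − λ) = −2σ, m2 m4 (r24⁻³ − λ) = −2σ, m1 m4 (r14⁻³ − λ) = 2σ, m2 m3 (r23⁻³ − λ) = 2σ. Then the 6×6 symmetric matrix D²L(r; λ, σ) = diag(f12, f13 − 2σ, f14 + 2σ, f23 + 2σ, f24 − 2σ, f34) + adiag(2σ, 0, 0, 0, 0, 2σ) is positive definite, where f_ij = m_i m_j (2 r_ij⁻³ + λ), diag denotes the diagonal 6×6 matrix with the given entries (in coordinate order r12, r13, r14, r23, r24, r34) and adiag denotes the anti-diagonal 6×6 matrix with the given anti-diagonal entries. Consequently every critical point of the restriction of U to the set {I = 1, F = 0} is a nondegenerate local minimum. -/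
noncomputable section

set_option maxHeartbeats 4000000

/-! ### Auxiliary lemmas -/

private lemma vc5' {α : Type*} (a : α) (u : Fin 5 → α) : Matrix.vecCons a u 5 = u 4 := rfl
private lemma vc4' {α : Type*} (a : α) (u : Fin 4 → α) : Matrix.vecCons a u 4 = u 3 := rfl
private lemma vc3' {α : Type*} (a : α) (u : Fin 3 → α) : Matrix.vecCons a u 3 = u 2 := rfl
private lemma vc2' {α : Type*} (a : α) (u : Fin 2 → α) : Matrix.vecCons a u 2 = u 1 := rfl
private lemma vc1' {α : Type*} (a : α) (u : Fin 1 → α) : Matrix.vecCons a u 1 = u 0 := rfl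

/-- Exact one-variable Taylor identity for `t ↦ c/t + b t²` at a critical point `ρ`. -/
private lemma one_var (c b ρ p : ℝ) (hρ : ρ ≠ 0) (hp : p ≠ 0)
    (hst : c / ρ ^ 2 = 2 * b * ρ) :
    c / p + b * p ^ 2 - (c / ρ + b * ρ ^ 2) = (c / (ρ ^ 2 * p) + b) * (p - ρ) ^ 2 := by
  have e : c = 2 * b * ρ ^ 3 := by field_simp at hst; linarith
  subst e
  field_simp
  ring

/-- Exact two-variable Taylor identity for the coupled pair of coordinates. -/
private lemma two_var (c0 c5 b0 b5 σ ρ0 ρ5 p0 p5 : ℝ) (h0 : ρ0 ≠ 0) (h5 : ρ5 ≠ 0)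
    (hp0 : p0 ≠ 0) (hp5 : p5 ≠ 0)
    (hs0 : c0 / ρ0 ^ 2 = 2 * b0 * ρ0 + 2 * σ * ρ5)
    (hs5 : c5 / ρ5 ^ 2 = 2 * b5 * ρ5 + 2 * σ * ρ0) :
    (c0 / p0 + b0 * p0 ^ 2 + c5 / p5 + b5 * p5 ^ 2 + 2 * σ * p0 * p5)
      - (c0 / ρ0 + b0 * ρ0 ^ 2 + c5 / ρ5 + b5 * ρ5 ^ 2 + 2 * σ * ρ0 * ρ5)
    = (c0 / (ρ0 ^ 2 * p0) + b0) * (p0 - ρ0) ^ 2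
      + (c5 / (ρ5 ^ 2 * p5) + b5) * (p5 - ρ5) ^ 2
      + 2 * σ * (p0 - ρ0) * (p5 - ρ5) := by
  have e0 : c0 = 2 * b0 * ρ0 ^ 3 + 2 * σ * ρ5 * ρ0 ^ 2 := by
    field_simp at hs0; linarith
  have e5 : c5 = 2 * b5 * ρ5 ^ 3 + 2 * σ * ρ0 * ρ5 ^ 2 := by
    field_simp at hs5; linarith
  subst e0 e5
  field_simp
  ring

private lemma pair_nonneg (K0 K5 s d0 d5 : ℝ) (hK0 : 0 < K0) (hT : s^2 ≤ K0*K5) :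
    0 ≤ K0*d0^2 + 2*s*d0*d5 + K5*d5^2 := by
  nlinarith [sq_nonneg (K0*d0 + s*d5), mul_nonneg (sub_nonneg.mpr hT) (sq_nonneg d5)]

private lemma pair_pos (K0 K5 s d0 d5 : ℝ) (hK0 : 0 < K0) (hK5 : 0 < K5)
    (hT : s^2 < K0*K5) (hd : d0 ≠ 0 ∨ d5 ≠ 0) :
    0 < K0*d0^2 + 2*s*d0*d5 + K5*d5^2 := by
  rcases hd with h | h
  · have h0 : 0 < d0^2 := lt_of_le_of_ne (sq_nonneg _) (Ne.symm (pow_ne_zero 2 h))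
    nlinarith [sq_nonneg (s*d0 + K5*d5), mul_pos (sub_pos.mpr hT) h0]
  · have h5 : 0 < d5^2 := lt_of_le_of_ne (sq_nonneg _) (Ne.symm (pow_ne_zero 2 h))
    nlinarith [sq_nonneg (K0*d0 + s*d5), mul_pos (sub_pos.mpr hT) h5]

private lemma lam_aux (a b u v lam sigma : ℝ) (ha : 0 < a) (hb : 0 < b)
    (hu : 0 < u) (hv : 0 < v)
    (h1 : a * (u - lam) = -(2*sigma)) (h2 : b * (v - lam) = 2*sigma) : 0 < lam := by
  nlinarith [mul_pos ha hu, mul_pos hb hv]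

private lemma lam_aux2 (m1 m3 m4 lam sigma : ℝ) (hm1 : 0 < m1) (hm3 : 0 < m3)
    (hm4 : 0 < m4) (hb1 : 0 < lam*m1*m3/2 - sigma) (hb2 : 0 < lam*m1*m4/2 + sigma) :
    0 < lam := by
  nlinarith [mul_pos hm1 hm3, mul_pos hm1 hm4]

private lemma diag_aux₁ (a u lam sigma : ℝ) (hau : 0 < a * u)
    (h : a * (u - lam) = -(2*sigma)) : 0 < a * (2*u + lam) - 2*sigma := by nlinarith
private lemma diag_aux₂ (a u lam sigma : ℝ) (hau : 0 < a * u)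
    (h : a * (u - lam) = 2*sigma) : 0 < a * (2*u + lam) + 2*sigma := by nlinarith
private lemma diag_aux₀ (a u lam : ℝ) (hau : 0 < a * u) (hal : 0 < a * lam) :
    0 < a * (2*u + lam) := by nlinarith

private lemma det_aux (A B u0 u5 lam sigma : ℝ) (hA : 0 < A) (hB : 0 < B)
    (hu0 : 0 < u0) (hu5 : 0 < u5) (hlam : 0 < lam)
    (hcc : (A*(u0 - lam)) * (B*(u5 - lam)) = 4*sigma^2) :
    (2*sigma)^2 < (A * (2*u0 + lam)) * (B * (2*u5 + lam)) := by
  nlinarith [mul_pos (mul_pos (mul_pos hA hB) hu0) hu5,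
    mul_pos (mul_pos (mul_pos hA hB) hlam) hu0,
    mul_pos (mul_pos (mul_pos hA hB) hlam) hu5]

private lemma val_aux (A B u0 u5 lam sigma : ℝ) (hA : 0 < A) (hB : 0 < B)
    (hu0 : 0 < u0) (hu5 : 0 < u5) (hlam : 0 < lam)
    (hcc : (A*(u0 - lam)) * (B*(u5 - lam)) = 4*sigma^2) :
    sigma^2 < (A * u0 + lam*A/2) * (B * u5 + lam*B/2) := by
  nlinarith [mul_pos (mul_pos (mul_pos hA hB) hu0) hu5,
    mul_pos (mul_pos (mul_pos hA hB) hlam) hu0,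
    mul_pos (mul_pos (mul_pos hA hB) hlam) hu5]

private lemma b_aux (c b ρ : ℝ) (hρ : 0 < ρ) (hc : 0 < c)
    (hst : c / ρ^2 = 2 * b * ρ) : 0 < b := by
  nlinarith [div_pos hc (pow_pos hρ 2), hst, hρ]

/-- The abstract 6×6 matrix of the relevant shape is Hermitian. -/
private lemma herm_aux (a0 a1 a2 a3 a4 a5 s : ℝ) :
    (!![a0,0,0,0,0,s; 0,a1,0,0,0,0; 0,0,a2,0,0,0; 0,0,0,a3,0,0;
        0,0,0,0,a4,0; s,0,0,0,0,a5] : Matrix (Fin 6) (Fin 6) ℝ).IsHermitian := by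
  ext i j
  fin_cases i <;> fin_cases j <;> rfl

/-- Positivity of the quadratic form of the abstract 6×6 matrix. -/
private lemma quad_pos (a0 a1 a2 a3 a4 a5 s : ℝ) (x : Fin 6 → ℝ) (hx : x ≠ 0)
    (h1 : 0 < a1) (h2 : 0 < a2) (h3 : 0 < a3) (h4 : 0 < a4)
    (h0 : 0 < a0) (h5 : 0 < a5) (hd : s^2 < a0 * a5) :
    0 < dotProduct (star x)
      ((!![a0,0,0,0,0,s; 0,a1,0,0,0,0; 0,0,a2,0,0,0; 0,0,0,a3,0,0;
           0,0,0,0,a4,0; s,0,0,0,0,a5] : Matrix (Fin 6) (Fin 6) ℝ).mulVec x) := by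
  have hex : ∃ i, x i ≠ 0 := by
    by_contra h; push_neg at h; exact hx (funext fun i => h i)
  simp only [dotProduct, Matrix.mulVec, Fin.sum_univ_six, star_trivial,
    Matrix.cons_val', Matrix.cons_val_zero, Matrix.cons_val_one, Matrix.head_cons,
    Matrix.empty_val', Matrix.cons_val_fin_one, Matrix.head_fin_const,
    Matrix.cons_val_two, Matrix.cons_val_three, Matrix.cons_val_four, Matrix.tail_cons,
    Matrix.of_apply, Pi.star_apply, vc5', vc4', vc3', vc2', vc1']
  have hq : ∀ j : Fin 6, x j ≠ 0 → 0 < x j ^ 2 := fun j h =>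
    lt_of_le_of_ne (sq_nonneg _) (Ne.symm (pow_ne_zero 2 h))
  obtain ⟨i, hi⟩ := hex
  fin_cases i
  · nlinarith [h5, sq_nonneg (s * x 0 + a5 * x 5), mul_pos (sub_pos.mpr hd) (hq 0 hi),
      mul_nonneg (mul_nonneg h5.le h1.le) (sq_nonneg (x 1)),
      mul_nonneg (mul_nonneg h5.le h2.le) (sq_nonneg (x 2)),
      mul_nonneg (mul_nonneg h5.le h3.le) (sq_nonneg (x 3)),
      mul_nonneg (mul_nonneg h5.le h4.le) (sq_nonneg (x 4))]
  · nlinarith [h0, sq_nonneg (a0 * x 0 + s * x 5), mul_pos (mul_pos h0 h1) (hq 1 hi),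
      mul_nonneg (sub_nonneg.mpr hd.le) (sq_nonneg (x 5)),
      mul_nonneg (mul_nonneg h0.le h2.le) (sq_nonneg (x 2)),
      mul_nonneg (mul_nonneg h0.le h3.le) (sq_nonneg (x 3)),
      mul_nonneg (mul_nonneg h0.le h4.le) (sq_nonneg (x 4))]
  · nlinarith [h0, sq_nonneg (a0 * x 0 + s * x 5), mul_pos (mul_pos h0 h2) (hq 2 hi),
      mul_nonneg (sub_nonneg.mpr hd.le) (sq_nonneg (x 5)),
      mul_nonneg (mul_nonneg h0.le h1.le) (sq_nonneg (x 1)),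
      mul_nonneg (mul_nonneg h0.le h3.le) (sq_nonneg (x 3)),
      mul_nonneg (mul_nonneg h0.le h4.le) (sq_nonneg (x 4))]
  · nlinarith [h0, sq_nonneg (a0 * x 0 + s * x 5), mul_pos (mul_pos h0 h3) (hq 3 hi),
      mul_nonneg (sub_nonneg.mpr hd.le) (sq_nonneg (x 5)),
      mul_nonneg (mul_nonneg h0.le h1.le) (sq_nonneg (x 1)),
      mul_nonneg (mul_nonneg h0.le h2.le) (sq_nonneg (x 2)),
      mul_nonneg (mul_nonneg h0.le h4.le) (sq_nonneg (x 4))]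
  · nlinarith [h0, sq_nonneg (a0 * x 0 + s * x 5), mul_pos (mul_pos h0 h4) (hq 4 hi),
      mul_nonneg (sub_nonneg.mpr hd.le) (sq_nonneg (x 5)),
      mul_nonneg (mul_nonneg h0.le h1.le) (sq_nonneg (x 1)),
      mul_nonneg (mul_nonneg h0.le h2.le) (sq_nonneg (x 2)),
      mul_nonneg (mul_nonneg h0.le h3.le) (sq_nonneg (x 3))]
  · nlinarith [h0, sq_nonneg (a0 * x 0 + s * x 5), mul_pos (sub_pos.mpr hd) (hq 5 hi),
      mul_nonneg (mul_nonneg h0.le h1.le) (sq_nonneg (x 1)),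
      mul_nonneg (mul_nonneg h0.le h2.le) (sq_nonneg (x 2)),
      mul_nonneg (mul_nonneg h0.le h3.le) (sq_nonneg (x 3)),
      mul_nonneg (mul_nonneg h0.le h4.le) (sq_nonneg (x 4))]

/-- The Newtonian potential `U(r) = Σ_{i<j} m_i m_j / r_ij`. -/
def U (m1 m2 m3 m4 : ℝ) (r : Fin 6 → ℝ) : ℝ :=
  m1 * m2 / r 0 + m1 * m3 / r 1 + m1 * m4 / r 2 +
    m2 * m3 / r 3 + m2 * m4 / r 4 + m3 * m4 / r 5

/-- The moment of inertia `I(r) = (1/(2M)) Σ_{i<j} m_i m_j r_ij²`. -/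
def Iner (m1 m2 m3 m4 : ℝ) (r : Fin 6 → ℝ) : ℝ :=
  (1 / (2 * (m1 + m2 + m3 + m4))) *
    (m1 * m2 * (r 0) ^ 2 + m1 * m3 * (r 1) ^ 2 + m1 * m4 * (r 2) ^ 2 +
      m2 * m3 * (r 3) ^ 2 + m2 * m4 * (r 4) ^ 2 + m3 * m4 * (r 5) ^ 2)

/-- The Hessian `D²L(r; λ, σ) = diag(f12, f13 − 2σ, f14 + 2σ, f23 + 2σ, f24 − 2σ, f34)
+ adiag(2σ, 0, 0, 0, 0, 2σ)` of the Lagrangian, where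
`f_ij = m_i m_j (2 r_ij⁻³ + λ)`. -/
def D2L (m1 m2 m3 m4 : ℝ) (r : Fin 6 → ℝ) (lam sigma : ℝ) : Matrix (Fin 6) (Fin 6) ℝ :=
  !![m1 * m2 * (2 * (r 0) ^ (-3 : ℤ) + lam), 0, 0, 0, 0, 2 * sigma;
     0, m1 * m3 * (2 * (r 1) ^ (-3 : ℤ) + lam) - 2 * sigma, 0, 0, 0, 0;
     0, 0, m1 * m4 * (2 * (r 2) ^ (-3 : ℤ) + lam) + 2 * sigma, 0, 0, 0;
     0, 0, 0, m2 * m3 * (2 * (r 3) ^ (-3 : ℤ) + lam) + 2 * sigma, 0, 0;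
     0, 0, 0, 0, m2 * m4 * (2 * (r 4) ^ (-3 : ℤ) + lam) - 2 * sigma, 0;
     2 * sigma, 0, 0, 0, 0, m3 * m4 * (2 * (r 5) ^ (-3 : ℤ) + lam)]

/-- Pointwise comparison: at any nearby admissible configuration `p` the potential is
strictly larger than at the critical configuration `r`. -/
private lemma key_min (m1 m2 m3 m4 lam sigma : ℝ) (hm1 : 0 < m1) (hm2 : 0 < m2)
    (hm3 : 0 < m3) (hm4 : 0 < m4)
    (r p : Fin 6 → ℝ) (hr : ∀ i, 0 < r i) (hp : ∀ i, 0 < p i)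
    (s0 : m1*m2/(r 0)^2 = 2*(lam*m1*m2/2)*(r 0) + 2*sigma*(r 5))
    (s5 : m3*m4/(r 5)^2 = 2*(lam*m3*m4/2)*(r 5) + 2*sigma*(r 0))
    (s1 : m1*m3/(r 1)^2 = 2*(lam*m1*m3/2 - sigma)*(r 1))
    (s2 : m1*m4/(r 2)^2 = 2*(lam*m1*m4/2 + sigma)*(r 2))
    (s3 : m2*m3/(r 3)^2 = 2*(lam*m2*m3/2 + sigma)*(r 3))
    (s4 : m2*m4/(r 4)^2 = 2*(lam*m2*m4/2 - sigma)*(r 4))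
    (hT : sigma^2 < (m1*m2/((r 0)^2 * p 0) + lam*m1*m2/2) *
        (m3*m4/((r 5)^2 * p 5) + lam*m3*m4/2))
    (hIp : Iner m1 m2 m3 m4 p = 1) (hIr : Iner m1 m2 m3 m4 r = 1)
    (hFp : F p = 0) (hFr : F r = 0) (hne : p ≠ r) :
    U m1 m2 m3 m4 r < U m1 m2 m3 m4 p := by
  have hM : (0:ℝ) < m1 + m2 + m3 + m4 := by linarith
  -- positivity of the coefficients
  have hb1 : 0 < lam*m1*m3/2 - sigma := b_aux _ _ _ (hr 1) (mul_pos hm1 hm3) s1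
  have hb2 : 0 < lam*m1*m4/2 + sigma := b_aux _ _ _ (hr 2) (mul_pos hm1 hm4) s2
  have hb3 : 0 < lam*m2*m3/2 + sigma := b_aux _ _ _ (hr 3) (mul_pos hm2 hm3) s3
  have hb4 : 0 < lam*m2*m4/2 - sigma := b_aux _ _ _ (hr 4) (mul_pos hm2 hm4) s4
  have hlam : 0 < lam := lam_aux2 m1 m3 m4 lam sigma hm1 hm3 hm4 hb1 hb2
  have hK0 : 0 < m1*m2/((r 0)^2 * p 0) + lam*m1*m2/2 := by
    have h1 := mul_pos (mul_pos hlam hm1) hm2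
    have h2 := div_pos (mul_pos hm1 hm2) (mul_pos (pow_pos (hr 0) 2) (hp 0))
    linarith
  have hK5 : 0 < m3*m4/((r 5)^2 * p 5) + lam*m3*m4/2 := by
    have h1 := mul_pos (mul_pos hlam hm3) hm4
    have h2 := div_pos (mul_pos hm3 hm4) (mul_pos (pow_pos (hr 5) 2) (hp 5))
    linarith
  have hK1 : 0 < m1*m3/((r 1)^2 * p 1) + (lam*m1*m3/2 - sigma) :=
    add_pos (div_pos (mul_pos hm1 hm3) (mul_pos (pow_pos (hr 1) 2) (hp 1))) hb1
  have hK2 : 0 < m1*m4/((r 2)^2 * p 2) + (lam*m1*m4/2 + sigma) :=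
    add_pos (div_pos (mul_pos hm1 hm4) (mul_pos (pow_pos (hr 2) 2) (hp 2))) hb2
  have hK3 : 0 < m2*m3/((r 3)^2 * p 3) + (lam*m2*m3/2 + sigma) :=
    add_pos (div_pos (mul_pos hm2 hm3) (mul_pos (pow_pos (hr 3) 2) (hp 3))) hb3
  have hK4 : 0 < m2*m4/((r 4)^2 * p 4) + (lam*m2*m4/2 - sigma) :=
    add_pos (div_pos (mul_pos hm2 hm4) (mul_pos (pow_pos (hr 4) 2) (hp 4))) hb4
  -- the exact expansion of the difference of potentials
  have expand : ∀ q : Fin 6 → ℝ, (∀ i, 0 < q i) →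
      U m1 m2 m3 m4 q + lam * (m1+m2+m3+m4) * Iner m1 m2 m3 m4 q + sigma * F q =
      (m1*m2 / q 0 + (lam*m1*m2/2) * (q 0)^2 + m3*m4 / q 5 + (lam*m3*m4/2) * (q 5)^2
        + 2*sigma*(q 0)*(q 5))
      + (m1*m3 / q 1 + (lam*m1*m3/2 - sigma) * (q 1)^2)
      + (m1*m4 / q 2 + (lam*m1*m4/2 + sigma) * (q 2)^2)
      + (m2*m3 / q 3 + (lam*m2*m3/2 + sigma) * (q 3)^2)
      + (m2*m4 / q 4 + (lam*m2*m4/2 - sigma) * (q 4)^2) := by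
    intro q hq
    have h0 := (hq 0).ne'
    have h1 := (hq 1).ne'
    have h2 := (hq 2).ne'
    have h3 := (hq 3).ne'
    have h4 := (hq 4).ne'
    have h5 := (hq 5).ne'
    simp only [U, Iner, F]
    field_simp
    ring
  have key := two_var (m1*m2) (m3*m4) (lam*m1*m2/2) (lam*m3*m4/2) sigma (r 0) (r 5) (p 0) (p 5)
      (hr 0).ne' (hr 5).ne' (hp 0).ne' (hp 5).ne' s0 s5
  have k1 := one_var (m1*m3) (lam*m1*m3/2 - sigma) (r 1) (p 1) (hr 1).ne' (hp 1).ne' s1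
  have k2 := one_var (m1*m4) (lam*m1*m4/2 + sigma) (r 2) (p 2) (hr 2).ne' (hp 2).ne' s2
  have k3 := one_var (m2*m3) (lam*m2*m3/2 + sigma) (r 3) (p 3) (hr 3).ne' (hp 3).ne' s3
  have k4 := one_var (m2*m4) (lam*m2*m4/2 - sigma) (r 4) (p 4) (hr 4).ne' (hp 4).ne' s4
  have hEp := expand p hp
  have hEr := expand r hr
  rw [hIp, hFp] at hEp
  rw [hIr, hFr] at hEr
  have hdiff : U m1 m2 m3 m4 p - U m1 m2 m3 m4 r =
      ((m1*m2/((r 0)^2 * p 0) + lam*m1*m2/2) * (p 0 - r 0)^2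
        + 2*sigma*(p 0 - r 0)*(p 5 - r 5)
        + (m3*m4/((r 5)^2 * p 5) + lam*m3*m4/2) * (p 5 - r 5)^2)
      + (m1*m3/((r 1)^2 * p 1) + (lam*m1*m3/2 - sigma)) * (p 1 - r 1)^2
      + (m1*m4/((r 2)^2 * p 2) + (lam*m1*m4/2 + sigma)) * (p 2 - r 2)^2
      + (m2*m3/((r 3)^2 * p 3) + (lam*m2*m3/2 + sigma)) * (p 3 - r 3)^2
      + (m2*m4/((r 4)^2 * p 4) + (lam*m2*m4/2 - sigma)) * (p 4 - r 4)^2 := by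
    linear_combination hEp - hEr + key + k1 + k2 + k3 + k4
  clear key k1 k2 k3 k4 hEp hEr s0 s5 s1 s2 s3 s4 expand hb1 hb2 hb3 hb4
  obtain ⟨i, hi⟩ : ∃ i, p i ≠ r i := by
    by_contra h; push_neg at h; exact hne (funext h)
  have hq : ∀ j : Fin 6, p j ≠ r j → 0 < (p j - r j)^2 := fun j h =>
    lt_of_le_of_ne (sq_nonneg _) (Ne.symm (pow_ne_zero 2 (sub_ne_zero_of_ne h)))
  have hn1 : 0 ≤ (m1*m3/((r 1)^2 * p 1) + (lam*m1*m3/2 - sigma)) * (p 1 - r 1)^2 :=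
    mul_nonneg hK1.le (sq_nonneg _)
  have hn2 : 0 ≤ (m1*m4/((r 2)^2 * p 2) + (lam*m1*m4/2 + sigma)) * (p 2 - r 2)^2 :=
    mul_nonneg hK2.le (sq_nonneg _)
  have hn3 : 0 ≤ (m2*m3/((r 3)^2 * p 3) + (lam*m2*m3/2 + sigma)) * (p 3 - r 3)^2 :=
    mul_nonneg hK3.le (sq_nonneg _)
  have hn4 : 0 ≤ (m2*m4/((r 4)^2 * p 4) + (lam*m2*m4/2 - sigma)) * (p 4 - r 4)^2 :=
    mul_nonneg hK4.le (sq_nonneg _)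
  have hpair0 : 0 ≤ (m1*m2/((r 0)^2 * p 0) + lam*m1*m2/2) * (p 0 - r 0)^2
      + 2*sigma*(p 0 - r 0)*(p 5 - r 5)
      + (m3*m4/((r 5)^2 * p 5) + lam*m3*m4/2) * (p 5 - r 5)^2 :=
    pair_nonneg _ _ _ _ _ hK0 hT.le
  fin_cases i
  · have hps : 0 < (m1*m2/((r 0)^2 * p 0) + lam*m1*m2/2) * (p 0 - r 0)^2
        + 2*sigma*(p 0 - r 0)*(p 5 - r 5)
        + (m3*m4/((r 5)^2 * p 5) + lam*m3*m4/2) * (p 5 - r 5)^2 :=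
      pair_pos _ _ _ _ _ hK0 hK5 hT (Or.inl (sub_ne_zero_of_ne hi))
    linarith only [hdiff, hps, hn1, hn2, hn3, hn4]
  · have hps := mul_pos hK1 (hq 1 hi)
    linarith only [hdiff, hpair0, hps, hn2, hn3, hn4]
  · have hps := mul_pos hK2 (hq 2 hi)
    linarith only [hdiff, hpair0, hn1, hps, hn3, hn4]
  · have hps := mul_pos hK3 (hq 3 hi)
    linarith only [hdiff, hpair0, hn1, hn2, hps, hn4]
  · have hps := mul_pos hK4 (hq 4 hi)
    linarith only [hdiff, hpair0, hn1, hn2, hn3, hps]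
  · have hps : 0 < (m1*m2/((r 0)^2 * p 0) + lam*m1*m2/2) * (p 0 - r 0)^2
        + 2*sigma*(p 0 - r 0)*(p 5 - r 5)
        + (m3*m4/((r 5)^2 * p 5) + lam*m3*m4/2) * (p 5 - r 5)^2 :=
      pair_pos _ _ _ _ _ hK0 hK5 hT (Or.inr (sub_ne_zero_of_ne hi))
    linarith only [hdiff, hps, hn1, hn2, hn3, hn4]

/-- At a solution of the six Dziobek–trapezoid equations the Hessian of the
Lagrangian is positive definite; consequently, a critical point of the
restriction of `U` to `{I = 1, F = 0}` is a nondegenerate local minimum. -/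
theorem hessian_posDef (m1 m2 m3 m4 : ℝ) (hm1 : 0 < m1) (hm2 : 0 < m2) (hm3 : 0 < m3)
    (hm4 : 0 < m4) (r : Fin 6 → ℝ) (hr : ∀ i, 0 < r i) (lam sigma : ℝ)
    (h12 : m1 * m2 * ((r 0) ^ (-3 : ℤ) - lam) = 2 * sigma * r 5 / r 0)
    (h34 : m3 * m4 * ((r 5) ^ (-3 : ℤ) - lam) = 2 * sigma * r 0 / r 5)
    (h13 : m1 * m3 * ((r 1) ^ (-3 : ℤ) - lam) = -(2 * sigma))
    (h24 : m2 * m4 * ((r 4) ^ (-3 : ℤ) - lam) = -(2 * sigma))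
    (h14 : m1 * m4 * ((r 2) ^ (-3 : ℤ) - lam) = 2 * sigma)
    (h23 : m2 * m3 * ((r 3) ^ (-3 : ℤ) - lam) = 2 * sigma) :
    (D2L m1 m2 m3 m4 r lam sigma).PosDef ∧
      (Iner m1 m2 m3 m4 r = 1 → F r = 0 →
        ∀ᶠ p in nhdsWithin r ({p : Fin 6 → ℝ | Iner m1 m2 m3 m4 p = 1 ∧ F p = 0} \ {r}),
          U m1 m2 m3 m4 r < U m1 m2 m3 m4 p) := by
  have zp : ∀ i : Fin 6, (r i) ^ (-3 : ℤ) = ((r i)^3)⁻¹ := by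
    intro i; simp [zpow_neg, zpow_ofNat]
  rw [zp 0] at h12
  rw [zp 5] at h34
  rw [zp 1] at h13
  rw [zp 4] at h24
  rw [zp 2] at h14
  rw [zp 3] at h23
  have hu0 : 0 < ((r 0)^3)⁻¹ := inv_pos.mpr (pow_pos (hr 0) 3)
  have hu1 : 0 < ((r 1)^3)⁻¹ := inv_pos.mpr (pow_pos (hr 1) 3)
  have hu2 : 0 < ((r 2)^3)⁻¹ := inv_pos.mpr (pow_pos (hr 2) 3)
  have hu3 : 0 < ((r 3)^3)⁻¹ := inv_pos.mpr (pow_pos (hr 3) 3)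
  have hu4 : 0 < ((r 4)^3)⁻¹ := inv_pos.mpr (pow_pos (hr 4) 3)
  have hu5 : 0 < ((r 5)^3)⁻¹ := inv_pos.mpr (pow_pos (hr 5) 3)
  have hlam : 0 < lam :=
    lam_aux (m1*m3) (m1*m4) (((r 1)^3)⁻¹) (((r 2)^3)⁻¹) lam sigma
      (mul_pos hm1 hm3) (mul_pos hm1 hm4) hu1 hu2 h13 h14
  have hcc : (m1*m2*(((r 0)^3)⁻¹ - lam)) * (m3*m4*(((r 5)^3)⁻¹ - lam)) = 4*sigma^2 := by
    have h0 := (hr 0).ne'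
    have h5 := (hr 5).ne'
    rw [h12, h34]
    field_simp
    ring
  have ha0 : 0 < m1*m2 * (2*((r 0)^3)⁻¹ + lam) :=
    diag_aux₀ _ _ _ (mul_pos (mul_pos hm1 hm2) hu0) (mul_pos (mul_pos hm1 hm2) hlam)
  have ha5 : 0 < m3*m4 * (2*((r 5)^3)⁻¹ + lam) :=
    diag_aux₀ _ _ _ (mul_pos (mul_pos hm3 hm4) hu5) (mul_pos (mul_pos hm3 hm4) hlam)
  have ha1 : 0 < m1*m3 * (2*((r 1)^3)⁻¹ + lam) - 2*sigma :=
    diag_aux₁ _ _ _ _ (mul_pos (mul_pos hm1 hm3) hu1) h13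
  have ha4 : 0 < m2*m4 * (2*((r 4)^3)⁻¹ + lam) - 2*sigma :=
    diag_aux₁ _ _ _ _ (mul_pos (mul_pos hm2 hm4) hu4) h24
  have ha2 : 0 < m1*m4 * (2*((r 2)^3)⁻¹ + lam) + 2*sigma :=
    diag_aux₂ _ _ _ _ (mul_pos (mul_pos hm1 hm4) hu2) h14
  have ha3 : 0 < m2*m3 * (2*((r 3)^3)⁻¹ + lam) + 2*sigma :=
    diag_aux₂ _ _ _ _ (mul_pos (mul_pos hm2 hm3) hu3) h23
  have hdet : (2*sigma)^2 < (m1*m2 * (2*((r 0)^3)⁻¹ + lam)) * (m3*m4 * (2*((r 5)^3)⁻¹ + lam)) :=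
    det_aux _ _ _ _ _ _ (mul_pos hm1 hm2) (mul_pos hm3 hm4) hu0 hu5 hlam hcc
  constructor
  · refine Matrix.posDef_iff_dotProduct_mulVec.mpr ⟨?_, ?_⟩
    · show (D2L m1 m2 m3 m4 r lam sigma).IsHermitian
      unfold D2L
      exact herm_aux _ _ _ _ _ _ _
    · intro x hx
      show 0 < dotProduct (star x) ((D2L m1 m2 m3 m4 r lam sigma).mulVec x)
      unfold D2L
      rw [zp 0, zp 1, zp 2, zp 3, zp 4, zp 5]
      exact quad_pos (m1 * m2 * (2 * ((r 0)^3)⁻¹ + lam))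
        (m1 * m3 * (2 * ((r 1)^3)⁻¹ + lam) - 2 * sigma)
        (m1 * m4 * (2 * ((r 2)^3)⁻¹ + lam) + 2 * sigma)
        (m2 * m3 * (2 * ((r 3)^3)⁻¹ + lam) + 2 * sigma)
        (m2 * m4 * (2 * ((r 4)^3)⁻¹ + lam) - 2 * sigma)
        (m3 * m4 * (2 * ((r 5)^3)⁻¹ + lam)) (2 * sigma) x hx
        (by linarith [ha1]) (by linarith [ha2]) (by linarith [ha3]) (by linarith [ha4])
        (by linarith [ha0]) (by linarith [ha5]) (by linarith [hdet])
  · intro hIr hFr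
    -- stationarity equations in divided form
    have s0 : m1*m2/(r 0)^2 = 2*(lam*m1*m2/2)*(r 0) + 2*sigma*(r 5) := by
      have h0 := (hr 0).ne'
      have h5 := (hr 5).ne'
      field_simp at h12 ⊢
      have hc : (m1 * m2 - (lam * m1 * m2 * r 0 ^ 3 + 2 * sigma * r 5 * r 0 ^ 2)) * r 0 = 0 := by
        linear_combination r 0 * h12
      rcases mul_eq_zero.mp hc with h | h
      · linarith
      · exact absurd h h0
    have s5 : m3*m4/(r 5)^2 = 2*(lam*m3*m4/2)*(r 5) + 2*sigma*(r 0) := by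
      have h0 := (hr 0).ne'
      have h5 := (hr 5).ne'
      field_simp at h34 ⊢
      have hc : (m3 * m4 - (lam * m3 * m4 * r 5 ^ 3 + 2 * sigma * r 0 * r 5 ^ 2)) * r 5 = 0 := by
        linear_combination r 5 * h34
      rcases mul_eq_zero.mp hc with h | h
      · linarith
      · exact absurd h h5
    have s1 : m1*m3/(r 1)^2 = 2*(lam*m1*m3/2 - sigma)*(r 1) := by
      have h1 := (hr 1).ne'
      field_simp at h13 ⊢
      linear_combination h13
    have s2 : m1*m4/(r 2)^2 = 2*(lam*m1*m4/2 + sigma)*(r 2) := by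
      have h2 := (hr 2).ne'
      field_simp at h14 ⊢
      linear_combination h14
    have s3 : m2*m3/(r 3)^2 = 2*(lam*m2*m3/2 + sigma)*(r 3) := by
      have h3 := (hr 3).ne'
      field_simp at h23 ⊢
      linear_combination h23
    have s4 : m2*m4/(r 4)^2 = 2*(lam*m2*m4/2 - sigma)*(r 4) := by
      have h4 := (hr 4).ne'
      field_simp at h24 ⊢
      linear_combination h24
    -- strict inequality of the coupling quantity at r
    have hval : sigma^2 < (m1*m2/((r 0)^2 * r 0) + lam*m1*m2/2) *
        (m3*m4/((r 5)^2 * r 5) + lam*m3*m4/2) := by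
      have e0 : m1*m2/((r 0)^2 * r 0) + lam*m1*m2/2
          = m1*m2 * ((r 0)^3)⁻¹ + lam*(m1*m2)/2 := by
        rw [show (r 0)^2 * r 0 = (r 0)^3 from by ring, div_eq_mul_inv]
        ring
      have e5 : m3*m4/((r 5)^2 * r 5) + lam*m3*m4/2
          = m3*m4 * ((r 5)^3)⁻¹ + lam*(m3*m4)/2 := by
        rw [show (r 5)^2 * r 5 = (r 5)^3 from by ring, div_eq_mul_inv]
        ring
      rw [e0, e5]
      exact val_aux _ _ _ _ _ _ (mul_pos hm1 hm2) (mul_pos hm3 hm4) hu0 hu5 hlam hcc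
    -- continuity of the coupling quantity
    have hc : ContinuousAt (fun q : Fin 6 → ℝ =>
        (m1*m2/((r 0)^2 * q 0) + lam*m1*m2/2) *
        (m3*m4/((r 5)^2 * q 5) + lam*m3*m4/2)) r := by
      apply ContinuousAt.mul
      · exact (continuousAt_const.div
          (continuousAt_const.mul (continuous_apply 0).continuousAt)
          (mul_pos (pow_pos (hr 0) 2) (hr 0)).ne').add continuousAt_const
      · exact (continuousAt_const.div
          (continuousAt_const.mul (continuous_apply 5).continuousAt)
          (mul_pos (pow_pos (hr 5) 2) (hr 5)).ne').add continuousAt_const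
    have hev1 : ∀ᶠ q in nhds r, ∀ i, 0 < q i := by
      rw [Filter.eventually_all]
      exact fun i => (continuous_apply i).continuousAt.eventually (eventually_gt_nhds (hr i))
    have hev2 : ∀ᶠ q in nhds r, sigma^2 <
        (m1*m2/((r 0)^2 * q 0) + lam*m1*m2/2) *
        (m3*m4/((r 5)^2 * q 5) + lam*m3*m4/2) :=
      hc.eventually (eventually_gt_nhds hval)
    have hev := hev1.and hev2
    filter_upwards [self_mem_nhdsWithin, hev.filter_mono nhdsWithin_le_nhds] with p hpmem hp2
    exact key_min m1 m2 m3 m4 lam sigma hm1 hm2 hm3 hm4 r p hr hp2.1 s0 s5 s1 s2 s3 s4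
      hp2.2 hpmem.1.1 hIr hpmem.1.2 hFr (by simpa using hpmem.2)
end
end

section
/- Let m1, m2, m3, m4 > 0, M = m1+m2+m3+m4, and let r ∈ ℝ⁶ have all six coordinates positive and satisfy F(r) = 0, K(r) = 0, and Q(r) ≠ 0. Then there exist real numbers λ and η with ∇U(r) + λ M ∇I(r) + η ∇H(r) = 0 if and only if there exist real numbers λ and σ with ∇U(r) + λ M ∇I(r) + σ ∇F(r) = 0. -/
noncomputable section

lemma Fpoly : F = fun r : Fin 6 → ℝ => 2 * r 0 * r 5 - r 1 * r 1 - r 4 * r 4 + r 3 * r 3 + r 2 * r 2 := by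
  funext r; simp only [F]; ring

set_option maxHeartbeats 1000000 in
lemma Hpoly : H = fun r : Fin 6 → ℝ => (-2)*(r 3 * r 3)*(r 4 * r 4)*(r 5 * r 5) + (2)*(r 2 * r 2)*(r 3 * r 3)*(r 5 * r 5) + (2)*(r 2 * r 2)*(r 3 * r 3)*(r 4 * r 4) + (-2)*(r 2 * r 2)*(r 3 * r 3)*(r 3 * r 3) + (-2)*(r 2 * r 2)*(r 2 * r 2)*(r 3 * r 3) + (2)*(r 1 * r 1)*(r 4 * r 4)*(r 5 * r 5) + (-2)*(r 1 * r 1)*(r 4 * r 4)*(r 4 * r 4) + (2)*(r 1 * r 1)*(r 3 * r 3)*(r 4 * r 4) + (-2)*(r 1 * r 1)*(r 2 * r 2)*(r 5 * r 5) + (2)*(r 1 * r 1)*(r 2 * r 2)*(r 4 * r 4) + (2)*(r 1 * r 1)*(r 2 * r 2)*(r 3 * r 3) + (-2)*(r 1 * r 1)*(r 1 * r 1)*(r 4 * r 4) + (-2)*(r 0 * r 0)*(r 5 * r 5)*(r 5 * r 5) + (2)*(r 0 * r 0)*(r 4 * r 4)*(r 5 * r 5) + (2)*(r 0 * r 0)*(r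 3 * r 3)*(r 5 * r 5) + (2)*(r 0 * r 0)*(r 2 * r 2)*(r 5 * r 5) + (-2)*(r 0 * r 0)*(r 2 * r 2)*(r 4 * r 4) + (2)*(r 0 * r 0)*(r 2 * r 2)*(r 3 * r 3) + (2)*(r 0 * r 0)*(r 1 * r 1)*(r 5 * r 5) + (2)*(r 0 * r 0)*(r 1 * r 1)*(r 4 * r 4) + (-2)*(r 0 * r 0)*(r 1 * r 1)*(r 3 * r 3) + (-2)*(r 0 * r 0)*(r 0 * r 0)*(r 5 * r 5) := by
  funext r
  simp [H, Matrix.det_succ_row_zero, Fin.sum_univ_succ]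
  simp +decide [Fin.succAbove_of_castSucc_lt, Fin.succAbove_of_le_castSucc]
  ring

set_option maxHeartbeats 2000000 in
lemma fderiv_H_eq_smul_fderiv_F (r : Fin 6 → ℝ) (hF : F r = 0) (hK : K r = 0) :
    fderiv ℝ H r = (Q r / 2) • fderiv ℝ F r := by
  have h := fun i : Fin 6 => hasFDerivAt_apply (𝕜 := ℝ) i r
  have hHd : HasFDerivAt (fun r : Fin 6 → ℝ => (-2)*(r 3 * r 3)*(r 4 * r 4)*(r 5 * r 5) + (2)*(r 2 * r 2)*(r 3 * r 3)*(r 5 * r 5) + (2)*(r 2 * r 2)*(r 3 * r 3)*(r 4 * r 4) + (-2)*(r 2 * r 2)*(r 3 * r 3)*(r 3 * r 3) + (-2)*(r 2 * r 2)*(r 2 * r 2)*(r 3 * r 3) + (2)*(r 1 * r 1)*(r 4 * r 4)*(r 5 * r 5) + (-2)*(r 1 * r 1)*(r 4 * r 4)*(r 4 * r 4) + (2)*(r 1 * r 1)*(r 3 * r 3)*(r 4 * r 4) + (-2)*(r 1 * r 1)*(r 2 * r 2)*(r 5 * r 5) + (2)*(r 1 * r 1)*(r 2 * r 2)*(r 4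 * r 4) + (2)*(r 1 * r 1)*(r 2 * r 2)*(r 3 * r 3) + (-2)*(r 1 * r 1)*(r 1 * r 1)*(r 4 * r 4) + (-2)*(r 0 * r 0)*(r 5 * r 5)*(r 5 * r 5) + (2)*(r 0 * r 0)*(r 4 * r 4)*(r 5 * r 5) + (2)*(r 0 * r 0)*(r 3 * r 3)*(r 5 * r 5) + (2)*(r 0 * r 0)*(r 2 * r 2)*(r 5 * r 5) + (-2)*(r 0 * r 0)*(r 2 * r 2)*(r 4 * r 4) + (2)*(r 0 * r 0)*(r 2 * r 2)*(r 3 * r 3) + (2)*(r 0 * r 0)*(r 1 * r 1)*(r 5 * r 5) + (2)*(r 0 * r 0)*(r 1 * r 1)*(r 4 * r 4) + (-2)*(r 0 * r 0)*(r 1 * r 1)*(r 3 * r 3) + (-2)*(r 0 * r 0)*(r 0 * r 0)*(r 5 * r 5)) _ r :=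
    ((((((((((((((((((((((((((h 3).mul (h 3)).const_mul ((-2 : ℝ))).mul ((h 4).mul (h 4))).mul ((h 5).mul (h 5))).add (((((h 2).mul (h 2)).const_mul ((2 : ℝ))).mul ((h 3).mul (h 3))).mul ((h 5).mul (h 5)))).add (((((h 2).mul (h 2)).const_mul ((2 : ℝ))).mul ((h 3).mul (h 3))).mul ((h 4).mul (h 4)))).add (((((h 2).mul (h 2)).const_mul ((-2 : ℝ))).mul ((h 3).mul (h 3))).mul ((h 3).mul (h 3)))).add (((((h 2).mul (h 2)).const_mul ((-2 : ℝ))).mul ((h 2).mul (h 2))).mul ((h 3).mul (h 3)))).add (((((h 1).mul (h 1)).const_mul ((2 : ℝ))).mul ((h 4).mul (h 4))).mul ((h 5).mul (h 5)))).add (((((h 1).mul (h 1)).const_mul ((-2 : ℝ))).mul ((h 4).mul (h 4))).mul ((h 4).mul (h 4)))).add (((((h 1).mul (h 1)).const_mul ((2 : ℝ))).mul ((h 3).mul (h 3))).mul ((h 4).mul (h 4)))).add (((((h 1).mul (h 1)).const_mul ((-2 : ℝ))).mul ((h 2).mul (h 2))).mul ((h 5).mul (h 5)))).add (((((h 1).mul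 (h 1)).const_mul ((2 : ℝ))).mul ((h 2).mul (h 2))).mul ((h 4).mul (h 4)))).add (((((h 1).mul (h 1)).const_mul ((2 : ℝ))).mul ((h 2).mul (h 2))).mul ((h 3).mul (h 3)))).add (((((h 1).mul (h 1)).const_mul ((-2 : ℝ))).mul ((h 1).mul (h 1))).mul ((h 4).mul (h 4)))).add (((((h 0).mul (h 0)).const_mul ((-2 : ℝ))).mul ((h 5).mul (h 5))).mul ((h 5).mul (h 5)))).add (((((h 0).mul (h 0)).const_mul ((2 : ℝ))).mul ((h 4).mul (h 4))).mul ((h 5).mul (h 5)))).add (((((h 0).mul (h 0)).const_mul ((2 : ℝ))).mul ((h 3).mul (h 3))).mul ((h 5).mul (h 5)))).add (((((h 0).mul (h 0)).const_mul ((2 : ℝ))).mul ((h 2).mul (h 2))).mul ((h 5).mul (h 5)))).add (((((h 0).mul (h 0)).const_mul ((-2 : ℝ))).mul ((h 2).mul (h 2))).mul ((h 4).mul (h 4)))).add (((((h 0).mul (h 0)).const_mul ((2 : ℝ))).mul ((h 2).mul (h 2))).mul ((h 3).mul (h 3)))).add (((((h 0).mul (h 0)).const_mul ((2 : ℝ))).mul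 ((h 1).mul (h 1))).mul ((h 5).mul (h 5)))).add (((((h 0).mul (h 0)).const_mul ((2 : ℝ))).mul ((h 1).mul (h 1))).mul ((h 4).mul (h 4)))).add (((((h 0).mul (h 0)).const_mul ((-2 : ℝ))).mul ((h 1).mul (h 1))).mul ((h 3).mul (h 3)))).add (((((h 0).mul (h 0)).const_mul ((-2 : ℝ))).mul ((h 0).mul (h 0))).mul ((h 5).mul (h 5))))
  have hFd : HasFDerivAt (fun r : Fin 6 → ℝ => 2 * r 0 * r 5 - r 1 * r 1 - r 4 * r 4 + r 3 * r 3 + r 2 * r 2) _ r :=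
    (((((((h 0).const_mul ((2:ℝ))).mul (h 5)).sub ((h 1).mul (h 1))).sub ((h 4).mul (h 4))).add ((h 3).mul (h 3))).add ((h 2).mul (h 2)))
  rw [← Hpoly] at hHd
  rw [← Fpoly] at hFd
  rw [hHd.fderiv, hFd.fderiv]
  refine ContinuousLinearMap.ext fun v => ?_
  simp only [ContinuousLinearMap.add_apply, ContinuousLinearMap.sub_apply,
    ContinuousLinearMap.smul_apply, ContinuousLinearMap.proj_apply, smul_eq_mul, Pi.mul_apply, Q]
  simp only [F] at hF
  simp only [K] at hK
  linear_combination (v 0 * ((-1)*r 5^3 + (1)*r 4^2*r 5 + (1)*r 3^2*r 5 + (1)*r 2^2*r 5 + (1)*r 1^2*r 5 + (-1)*r 0*r 4^2 + (1)*r 0*r 3^2 + (1)*r 0*r 2^2 + (-1)*r 0*r 1^2 + (-3)*r 0^2*r 5) + v 1 * ((-1)*r 1*r 5^2 + (4)*r 1*r 4^2 + (2)*r 0*r 1*r 5 + (-1)*r 0^2*r 1) + v 2 * ((1)*r 2*r 5^2 + (-4)*r 2*r 3^2 + (2)*r 0*r 2*r 5 + (1)*r 0^2*r 2) + v 3 *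 ((1)*r 3*r 5^2 + (-4)*r 2^2*r 3 + (2)*r 0*r 3*r 5 + (1)*r 0^2*r 3) + v 4 * ((-1)*r 4*r 5^2 + (4)*r 1^2*r 4 + (2)*r 0*r 4*r 5 + (-1)*r 0^2*r 4) + v 5 * ((-1)*r 4^2*r 5 + (1)*r 3^2*r 5 + (1)*r 2^2*r 5 + (-1)*r 1^2*r 5 + (-3)*r 0*r 5^2 + (1)*r 0*r 4^2 + (1)*r 0*r 3^2 + (1)*r 0*r 2^2 + (1)*r 0*r 1^2 + (-1)*r 0^3)) * hF + (v 0 * ((1)*r 4^2 + (-1)*r 3^2 + (1)*r 2^2 + (-1)*r 1^2) + v 1 * ((2)*r 1*r 5 + (-2)*r 0*r 1) + v 2 * ((2)*r 2*r 5 + (2)*r 0*r 2) + v 3 * ((-2)*r 3*r 5 + (-2)*r 0*r 3) + v 4 * ((-2)*r 4*r 5 + (2)*r 0*r 4) + v 5 * ((-1)*r 4^2 + (-1)*r 3^2 + (1)*r 2^2 + (1)*r 1^2)) * hK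

/-- At a positive distance vector with `F(r) = 0`, `K(r) = 0` and `Q(r) ≠ 0`,
Lagrange multipliers exist for the constraint `H = 0` iff they exist for the
constraint `F = 0`. -/
theorem lagrange_H_iff_lagrange_F (m1 m2 m3 m4 : ℝ) (hm1 : 0 < m1) (hm2 : 0 < m2)
    (hm3 : 0 < m3) (hm4 : 0 < m4) (r : Fin 6 → ℝ) (hr : ∀ i, 0 < r i)
    (hF : F r = 0) (hK : K r = 0) (hQ : Q r ≠ 0) :
    (∃ lam eta : ℝ,
        fderiv ℝ (U m1 m2 m3 m4) r
            + (lam * (m1 + m2 + m3 + m4)) • fderiv ℝ (Iner m1 m2 m3 m4) r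
            + eta • fderiv ℝ H r = 0) ↔
      (∃ lam sigma : ℝ,
        fderiv ℝ (U m1 m2 m3 m4) r
            + (lam * (m1 + m2 + m3 + m4)) • fderiv ℝ (Iner m1 m2 m3 m4) r
            + sigma • fderiv ℝ F r = 0) := by
  have hc : Q r / 2 ≠ 0 := div_ne_zero hQ two_ne_zero
  have key := fderiv_H_eq_smul_fderiv_F r hF hK
  constructor
  · rintro ⟨lam, eta, hlag⟩
    refine ⟨lam, eta * (Q r / 2), ?_⟩
    rw [key, smul_smul] at hlag
    exact hlag
  · rintro ⟨lam, sigma, hlag⟩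
    refine ⟨lam, sigma / (Q r / 2), ?_⟩
    rw [key, smul_smul, div_mul_cancel₀ _ hc]
    exact hlag
end
end

section
/- The set M₀ = { r ∈ ℝ⁶ : r12² + r13² + r14² + r23² + r24² + r34² = 8 and F(r) = 0 } is homeomorphic to S² × S², the product of two 2-spheres. Explicitly, the map r ↦ ((v1, v2, v3), (w1, w2, w3)) with v1 = (r12 + r34)/(2√2), v2 = r14/2, v3 = r23/2, w1 = (r12 − r34)/(2√2), w2 = r13/2, w3 = r24/2 is a homeomorphism of M₀ onto the product of the unit spheres {v1² + v2² + v3² = 1} and {w1² + w2² + w3² = 1} in ℝ³. -/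
noncomputable section

/-- The constraint set `M₀ = {Σ r_ij² = 8, F = 0}` for four unit masses. -/
def M0 : Set (Fin 6 → ℝ) :=
  {r | (r 0) ^ 2 + (r 1) ^ 2 + (r 2) ^ 2 + (r 3) ^ 2 + (r 4) ^ 2 + (r 5) ^ 2 = 8 ∧
    F r = 0}

/-- The unit 2-sphere in ℝ³. -/
def Sph : Set (Fin 3 → ℝ) :=
  {v | (v 0) ^ 2 + (v 1) ^ 2 + (v 2) ^ 2 = 1}

/-- The explicit change of variables `r ↦ ((v1,v2,v3),(w1,w2,w3))` with
`v1 = (r12+r34)/(2√2)`, `v2 = r14/2`, `v3 = r23/2`,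
`w1 = (r12−r34)/(2√2)`, `w2 = r13/2`, `w3 = r24/2`. -/
def phi (r : Fin 6 → ℝ) : (Fin 3 → ℝ) × (Fin 3 → ℝ) :=
  (![(r 0 + r 5) / (2 * Real.sqrt 2), r 2 / 2, r 3 / 2],
   ![(r 0 - r 5) / (2 * Real.sqrt 2), r 1 / 2, r 4 / 2])

def psi (p : (Fin 3 → ℝ) × (Fin 3 → ℝ)) : Fin 6 → ℝ :=
  ![Real.sqrt 2 * (p.1 0 + p.2 0), 2 * p.2 1, 2 * p.1 1, 2 * p.1 2, 2 * p.2 2,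
    Real.sqrt 2 * (p.1 0 - p.2 0)]

lemma hs2 : Real.sqrt 2 ^ 2 = 2 := Real.sq_sqrt (by norm_num)

lemma hs0 : Real.sqrt 2 ≠ 0 := by positivity

lemma phi_mem {r : Fin 6 → ℝ} (hr : r ∈ M0) :
    (phi r).1 ∈ Sph ∧ (phi r).2 ∈ Sph := by
  obtain ⟨h1, h2⟩ := hr
  unfold F at h2
  constructor
  · show ((r 0 + r 5) / (2 * Real.sqrt 2)) ^ 2 + (r 2 / 2) ^ 2 + (r 3 / 2) ^ 2 = 1
    rw [div_pow, mul_pow, hs2]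
    field_simp
    nlinarith
  · show ((r 0 - r 5) / (2 * Real.sqrt 2)) ^ 2 + (r 1 / 2) ^ 2 + (r 4 / 2) ^ 2 = 1
    rw [div_pow, mul_pow, hs2]
    field_simp
    nlinarith

lemma psi_mem {p : (Fin 3 → ℝ) × (Fin 3 → ℝ)} (h1 : p.1 ∈ Sph) (h2 : p.2 ∈ Sph) :
    psi p ∈ M0 := by
  have h1' : p.1 0 ^ 2 + p.1 1 ^ 2 + p.1 2 ^ 2 = 1 := h1
  have h2' : p.2 0 ^ 2 + p.2 1 ^ 2 + p.2 2 ^ 2 = 1 := h2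
  constructor
  · show (Real.sqrt 2 * (p.1 0 + p.2 0)) ^ 2 + (2 * p.2 1) ^ 2 + (2 * p.1 1) ^ 2
      + (2 * p.1 2) ^ 2 + (2 * p.2 2) ^ 2 + (Real.sqrt 2 * (p.1 0 - p.2 0)) ^ 2 = 8
    nlinarith [hs2]
  · show 2 * (Real.sqrt 2 * (p.1 0 + p.2 0)) * (Real.sqrt 2 * (p.1 0 - p.2 0))
      - (2 * p.2 1) ^ 2 - (2 * p.2 2) ^ 2 + (2 * p.1 2) ^ 2 + (2 * p.1 1) ^ 2 = 0
    nlinarith [hs2]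

lemma psi_phi (r : Fin 6 → ℝ) : psi (phi r) = r := by
  funext i
  fin_cases i
  · show Real.sqrt 2 * ((r 0 + r 5) / (2 * Real.sqrt 2) + (r 0 - r 5) / (2 * Real.sqrt 2)) = r 0
    field_simp; ring
  · show 2 * (r 1 / 2) = r 1; ring
  · show 2 * (r 2 / 2) = r 2; ring
  · show 2 * (r 3 / 2) = r 3; ring
  · show 2 * (r 4 / 2) = r 4; ring
  · show Real.sqrt 2 * ((r 0 + r 5) / (2 * Real.sqrt 2) - (r 0 - r 5) / (2 * Real.sqrt 2)) = r 5
    field_simp; ring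

lemma phi_psi (p : (Fin 3 → ℝ) × (Fin 3 → ℝ)) : phi (psi p) = p := by
  have key : ∀ (x : Fin 3 → ℝ) (i : Fin 3), x i = x i := fun _ _ => rfl
  refine Prod.ext (funext fun i => ?_) (funext fun i => ?_) <;> fin_cases i
  · show (Real.sqrt 2 * (p.1 0 + p.2 0) + Real.sqrt 2 * (p.1 0 - p.2 0)) / (2 * Real.sqrt 2) = p.1 0
    field_simp; ring
  · show 2 * p.1 1 / 2 = p.1 1; ring
  · show 2 * p.1 2 / 2 = p.1 2; ring
  · show (Real.sqrt 2 * (p.1 0 + p.2 0) - Real.sqrt 2 * (p.1 0 - p.2 0)) / (2 * Real.sqrt 2) = p.2 0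
    field_simp; ring
  · show 2 * p.2 1 / 2 = p.2 1; ring
  · show 2 * p.2 2 / 2 = p.2 2; ring

lemma phi_cont : Continuous phi := by
  have h1 : Continuous fun r : Fin 6 → ℝ => (phi r).1 := by
    refine continuous_pi fun i => ?_
    fin_cases i
    · show Continuous fun r : Fin 6 → ℝ => (r 0 + r 5) / (2 * Real.sqrt 2); fun_prop
    · show Continuous fun r : Fin 6 → ℝ => r 2 / 2; fun_prop
    · show Continuous fun r : Fin 6 → ℝ => r 3 / 2; fun_prop
  have h2 : Continuous fun r : Fin 6 → ℝ => (phi r).2 := by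
    refine continuous_pi fun i => ?_
    fin_cases i
    · show Continuous fun r : Fin 6 → ℝ => (r 0 - r 5) / (2 * Real.sqrt 2); fun_prop
    · show Continuous fun r : Fin 6 → ℝ => r 1 / 2; fun_prop
    · show Continuous fun r : Fin 6 → ℝ => r 4 / 2; fun_prop
  exact h1.prodMk h2

lemma psi_cont : Continuous psi := by
  refine continuous_pi fun i => ?_
  fin_cases i
  · show Continuous fun p : (Fin 3 → ℝ) × (Fin 3 → ℝ) => Real.sqrt 2 * (p.1 0 + p.2 0); fun_prop
  · show Continuous fun p : (Fin 3 → ℝ) × (Fin 3 → ℝ) => 2 * p.2 1; fun_prop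
  · show Continuous fun p : (Fin 3 → ℝ) × (Fin 3 → ℝ) => 2 * p.1 1; fun_prop
  · show Continuous fun p : (Fin 3 → ℝ) × (Fin 3 → ℝ) => 2 * p.1 2; fun_prop
  · show Continuous fun p : (Fin 3 → ℝ) × (Fin 3 → ℝ) => 2 * p.2 2; fun_prop
  · show Continuous fun p : (Fin 3 → ℝ) × (Fin 3 → ℝ) => Real.sqrt 2 * (p.1 0 - p.2 0); fun_prop

/-- `M₀` is homeomorphic to `S² × S²`, explicitly via the map `phi`. -/
theorem M0_homeomorph_sphere_prod_sphere :
    ∃ e : M0 ≃ₜ Sph × Sph, ∀ x : M0,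
      ((e x).1 : Fin 3 → ℝ) = (phi (x : Fin 6 → ℝ)).1 ∧
      ((e x).2 : Fin 3 → ℝ) = (phi (x : Fin 6 → ℝ)).2 := by
  refine ⟨{
    toFun := fun x => (⟨(phi x).1, (phi_mem x.2).1⟩, ⟨(phi x).2, (phi_mem x.2).2⟩)
    invFun := fun p => ⟨psi ((p.1 : Fin 3 → ℝ), (p.2 : Fin 3 → ℝ)), psi_mem p.1.2 p.2.2⟩
    left_inv := fun x => Subtype.ext (psi_phi (x : Fin 6 → ℝ))
    right_inv := fun p => by
      have h := phi_psi ((p.1 : Fin 3 → ℝ), (p.2 : Fin 3 → ℝ))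
      exact Prod.ext (Subtype.ext (congrArg Prod.fst h)) (Subtype.ext (congrArg Prod.snd h))
    continuous_toFun := by
      have h := phi_cont.comp (continuous_subtype_val (p := (· ∈ M0)))
      exact ((h.fst).subtype_mk _).prodMk ((h.snd).subtype_mk _)
    continuous_invFun := by
      have h : Continuous fun p : Sph × Sph =>
          psi ((p.1 : Fin 3 → ℝ), (p.2 : Fin 3 → ℝ)) :=
        psi_cont.comp ((continuous_subtype_val.comp continuous_fst).prodMk
          (continuous_subtype_val.comp continuous_snd))
      exact h.subtype_mk _
  }, fun x => ⟨rfl, rfl⟩⟩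
end
end

section
/- Let m1, m2, m3, m4 > 0 and M = m1+m2+m3+m4. The set M⁺ = { r ∈ ℝ⁶ : all r_ij ≥ 0, I(r) = 1, F(r) = 0 }, with the subspace topology from ℝ⁶, is contractible; in particular its Euler characteristic equals 1. -/
noncomputable section

/-- The nonnegative part `M⁺` of `{I = 1, F = 0}`. -/
def Mplus (m1 m2 m3 m4 : ℝ) : Set (Fin 6 → ℝ) :=
  {r | (∀ i, 0 ≤ r i) ∧ Iner m1 m2 m3 m4 r = 1 ∧ F r = 0}

namespace MplusAux

/-- linear interpolation of a coordinate toward `1`. -/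
def gA (t : ℝ) (r : Fin 6 → ℝ) (i : Fin 6) : ℝ := (1 - t) * r i + t

def rho (t : ℝ) (r : Fin 6 → ℝ) : ℝ :=
  Real.sqrt (2 * gA t r 0 * gA t r 5 + gA t r 2 ^ 2 + gA t r 3 ^ 2)

def nn (t : ℝ) (r : Fin 6 → ℝ) : ℝ :=
  Real.sqrt (gA t r 1 ^ 2 + gA t r 4 ^ 2)

def gmap (t : ℝ) (r : Fin 6 → ℝ) : Fin 6 → ℝ :=
  fun i => if i = 1 ∨ i = 4 then rho t r * gA t r i / nn t r else gA t r i

def smap (m1 m2 m3 m4 : ℝ) (x : Fin 6 → ℝ) : Fin 6 → ℝ :=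
  fun i => (Real.sqrt (Iner m1 m2 m3 m4 x))⁻¹ * x i

lemma gA_nonneg {t : ℝ} {r : Fin 6 → ℝ} (ht0 : 0 ≤ t) (ht1 : t ≤ 1) (hr : 0 ≤ r i) :
    0 ≤ gA t r i := by
  have : 0 ≤ (1 - t) * r i := mul_nonneg (by linarith) hr
  unfold gA; linarith

lemma rho_nonneg (t : ℝ) (r : Fin 6 → ℝ) : 0 ≤ rho t r := Real.sqrt_nonneg _

lemma nn_nonneg (t : ℝ) (r : Fin 6 → ℝ) : 0 ≤ nn t r := Real.sqrt_nonneg _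

lemma rho_sq {t : ℝ} {r : Fin 6 → ℝ} (ht0 : 0 ≤ t) (ht1 : t ≤ 1)
    (hr : ∀ i, 0 ≤ r i) :
    rho t r ^ 2 = 2 * gA t r 0 * gA t r 5 + gA t r 2 ^ 2 + gA t r 3 ^ 2 := by
  apply Real.sq_sqrt
  have h0 := gA_nonneg (i := 0) ht0 ht1 (hr 0)
  have h5 := gA_nonneg (i := 5) ht0 ht1 (hr 5)
  positivity

lemma nn_sq (t : ℝ) (r : Fin 6 → ℝ) : nn t r ^ 2 = gA t r 1 ^ 2 + gA t r 4 ^ 2 := by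
  apply Real.sq_sqrt; positivity

lemma nn_eq_zero {t : ℝ} {r : Fin 6 → ℝ} (ht0 : 0 ≤ t) (ht1 : t ≤ 1)
    (hr : ∀ i, 0 ≤ r i) (h : nn t r = 0) : t = 0 ∧ r 1 = 0 ∧ r 4 = 0 := by
  have h2 : gA t r 1 ^ 2 + gA t r 4 ^ 2 = 0 := by
    have := nn_sq t r; rw [h] at this; linarith [this]
  have h1 : gA t r 1 = 0 := by nlinarith [sq_nonneg (gA t r 1), sq_nonneg (gA t r 4)]
  have h4 : gA t r 4 = 0 := by nlinarith [sq_nonneg (gA t r 1), sq_nonneg (gA t r 4)]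
  unfold gA at h1 h4
  have hm1 : 0 ≤ (1 - t) * r 1 := mul_nonneg (by linarith) (hr 1)
  have hm4 : 0 ≤ (1 - t) * r 4 := mul_nonneg (by linarith) (hr 4)
  have ht : t = 0 := by linarith
  subst ht
  constructor; rfl
  constructor <;> nlinarith

end MplusAux
namespace MplusAux

lemma gmap0 (t : ℝ) (r : Fin 6 → ℝ) : gmap t r 0 = gA t r 0 := by simp [gmap]
lemma gmap2 (t : ℝ) (r : Fin 6 → ℝ) : gmap t r 2 = gA t r 2 := by simp [gmap]
lemma gmap3 (t : ℝ) (r : Fin 6 → ℝ) : gmap t r 3 = gA t r 3 := by simp [gmap]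
lemma gmap5 (t : ℝ) (r : Fin 6 → ℝ) : gmap t r 5 = gA t r 5 := by simp [gmap]
lemma gmap1 (t : ℝ) (r : Fin 6 → ℝ) : gmap t r 1 = rho t r * gA t r 1 / nn t r := by simp [gmap]
lemma gmap4 (t : ℝ) (r : Fin 6 → ℝ) : gmap t r 4 = rho t r * gA t r 4 / nn t r := by simp [gmap]

lemma F_gmap {t : ℝ} {r : Fin 6 → ℝ} (ht0 : 0 ≤ t) (ht1 : t ≤ 1)
    (hr : ∀ i, 0 ≤ r i) (hF : F r = 0) : F (gmap t r) = 0 := by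
  unfold F
  rw [gmap0, gmap1, gmap2, gmap3, gmap4, gmap5]
  by_cases hn : nn t r = 0
  · obtain ⟨ht, h1, h4⟩ := nn_eq_zero ht0 ht1 hr hn
    subst ht
    have hgA : ∀ i, gA 0 r i = r i := by intro i; simp [gA]
    have hrho : rho 0 r = 0 := by
      unfold rho
      rw [hgA 0, hgA 5, hgA 2, hgA 3]
      have : 2 * r 0 * r 5 + r 2 ^ 2 + r 3 ^ 2 = 0 := by
        unfold F at hF; rw [h1, h4] at hF; nlinarith [hF]
      rw [this, Real.sqrt_zero]
    rw [hrho, hgA 0, hgA 5, hgA 2, hgA 3]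
    unfold F at hF
    rw [h1, h4] at hF
    ring_nf
    nlinarith [hF]
  · have hnn2 : nn t r ^ 2 = gA t r 1 ^ 2 + gA t r 4 ^ 2 := nn_sq t r
    have hrho2 := rho_sq ht0 ht1 hr
    field_simp
    nlinarith [hnn2, hrho2]

end MplusAux
namespace MplusAux

lemma gmap_zero {r : Fin 6 → ℝ} (hr : ∀ i, 0 ≤ r i) (hF : F r = 0) :
    gmap 0 r = r := by
  have hgA : ∀ i, gA 0 r i = r i := by intro i; simp [gA]
  have hrn : rho 0 r = nn 0 r := by
    unfold rho nn
    rw [hgA 0, hgA 5, hgA 2, hgA 3, hgA 1, hgA 4]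
    congr 1
    unfold F at hF; linarith
  funext i
  rcases show i = 0 ∨ i = 1 ∨ i = 2 ∨ i = 3 ∨ i = 4 ∨ i = 5 by omega with
    h | h | h | h | h | h <;> subst h
  · rw [gmap0, hgA]
  · rw [gmap1, hgA, hrn]
    by_cases hn : nn 0 r = 0
    · obtain ⟨_, h1, _⟩ := nn_eq_zero le_rfl zero_le_one hr hn
      rw [hn, h1]; simp
    · field_simp
  · rw [gmap2, hgA]
  · rw [gmap3, hgA]
  · rw [gmap4, hgA, hrn]
    by_cases hn : nn 0 r = 0
    · obtain ⟨_, _, h4⟩ := nn_eq_zero le_rfl zero_le_one hr hn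
      rw [hn, h4]; simp
    · field_simp
  · rw [gmap5, hgA]

lemma gmap_one (r r' : Fin 6 → ℝ) : gmap 1 r = gmap 1 r' := by
  have h : ∀ (s : Fin 6 → ℝ) i, gA 1 s i = 1 := by intro s i; simp [gA]
  funext i
  unfold gmap rho nn
  simp only [h]

end MplusAux
namespace MplusAux

variable {m1 m2 m3 m4 : ℝ}

lemma iner_continuous : Continuous (Iner m1 m2 m3 m4) := by
  unfold Iner; fun_prop

lemma iner_nonneg (hm1 : 0 < m1) (hm2 : 0 < m2) (hm3 : 0 < m3) (hm4 : 0 < m4)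
    (x : Fin 6 → ℝ) : 0 ≤ Iner m1 m2 m3 m4 x := by
  unfold Iner; positivity

lemma iner_pos (hm1 : 0 < m1) (hm2 : 0 < m2) (hm3 : 0 < m3) (hm4 : 0 < m4)
    {x : Fin 6 → ℝ} (hx : ∃ i, x i ≠ 0) : 0 < Iner m1 m2 m3 m4 x := by
  have hM : 0 < 1 / (2 * (m1 + m2 + m3 + m4)) := by positivity
  apply mul_pos hM
  have h0 := mul_nonneg (mul_pos hm1 hm2).le (sq_nonneg (x 0))
  have h1 := mul_nonneg (mul_pos hm1 hm3).le (sq_nonneg (x 1))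
  have h2 := mul_nonneg (mul_pos hm1 hm4).le (sq_nonneg (x 2))
  have h3 := mul_nonneg (mul_pos hm2 hm3).le (sq_nonneg (x 3))
  have h4 := mul_nonneg (mul_pos hm2 hm4).le (sq_nonneg (x 4))
  have h5 := mul_nonneg (mul_pos hm3 hm4).le (sq_nonneg (x 5))
  obtain ⟨i, hi⟩ := hx
  have hsq : 0 < x i ^ 2 := lt_of_le_of_ne (sq_nonneg _) (Ne.symm (pow_ne_zero 2 hi))
  rcases show i = 0 ∨ i = 1 ∨ i = 2 ∨ i = 3 ∨ i = 4 ∨ i = 5 by omega with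
    h | h | h | h | h | h <;> subst h
  · nlinarith [mul_pos (mul_pos hm1 hm2) hsq]
  · nlinarith [mul_pos (mul_pos hm1 hm3) hsq]
  · nlinarith [mul_pos (mul_pos hm1 hm4) hsq]
  · nlinarith [mul_pos (mul_pos hm2 hm3) hsq]
  · nlinarith [mul_pos (mul_pos hm2 hm4) hsq]
  · nlinarith [mul_pos (mul_pos hm3 hm4) hsq]

lemma iner_smul (s : ℝ) (x : Fin 6 → ℝ) :
    Iner m1 m2 m3 m4 (fun i => s * x i) = s ^ 2 * Iner m1 m2 m3 m4 x := by
  unfold Iner; ring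

lemma F_smul (s : ℝ) (x : Fin 6 → ℝ) : F (fun i => s * x i) = s ^ 2 * F x := by
  unfold F; ring

lemma smap_mem (hm1 : 0 < m1) (hm2 : 0 < m2) (hm3 : 0 < m3) (hm4 : 0 < m4)
    {x : Fin 6 → ℝ} (hx : ∀ i, 0 ≤ x i) (hFx : F x = 0)
    (hI : 0 < Iner m1 m2 m3 m4 x) :
    smap m1 m2 m3 m4 x ∈ Mplus m1 m2 m3 m4 := by
  have hs : 0 < Real.sqrt (Iner m1 m2 m3 m4 x) := Real.sqrt_pos.mpr hI
  have hs2 : (Real.sqrt (Iner m1 m2 m3 m4 x))⁻¹ ^ 2 = (Iner m1 m2 m3 m4 x)⁻¹ := by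
    rw [inv_pow, Real.sq_sqrt hI.le]
  refine ⟨fun i => mul_nonneg (inv_nonneg.mpr hs.le) (hx i), ?_, ?_⟩
  · rw [show smap m1 m2 m3 m4 x = fun i => (Real.sqrt (Iner m1 m2 m3 m4 x))⁻¹ * x i from rfl,
      iner_smul, hs2]
    exact inv_mul_cancel₀ hI.ne'
  · rw [show smap m1 m2 m3 m4 x = fun i => (Real.sqrt (Iner m1 m2 m3 m4 x))⁻¹ * x i from rfl,
      F_smul, hFx, mul_zero]

lemma smap_of_iner_one {x : Fin 6 → ℝ} (hI : Iner m1 m2 m3 m4 x = 1) :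
    smap m1 m2 m3 m4 x = x := by
  funext i; unfold smap; rw [hI, Real.sqrt_one, inv_one, one_mul]

end MplusAux
namespace MplusAux

variable {m1 m2 m3 m4 : ℝ}

lemma rho_zero_eq_zero {r : Fin 6 → ℝ} (hF : F r = 0)
    (h1 : r 1 = 0) (h4 : r 4 = 0) : rho 0 r = 0 := by
  have hgA : ∀ i, gA 0 r i = r i := by intro i; simp [gA]
  unfold rho
  rw [hgA 0, hgA 5, hgA 2, hgA 3]
  have : 2 * r 0 * r 5 + r 2 ^ 2 + r 3 ^ 2 = 0 := by
    unfold F at hF; rw [h1, h4] at hF; nlinarith [hF]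
  rw [this, Real.sqrt_zero]

lemma iner_gmap_pos (hm1 : 0 < m1) (hm2 : 0 < m2) (hm3 : 0 < m3) (hm4 : 0 < m4)
    {t : ℝ} {r : Fin 6 → ℝ} (ht0 : 0 ≤ t) (ht1 : t ≤ 1)
    (hr : ∀ i, 0 ≤ r i) (hF : F r = 0) (hI : t = 0 → Iner m1 m2 m3 m4 r = 1) :
    0 < Iner m1 m2 m3 m4 (gmap t r) := by
  apply iner_pos hm1 hm2 hm3 hm4
  rcases eq_or_lt_of_le ht0 with ht | ht
  · subst ht
    rw [gmap_zero hr hF]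
    by_contra h
    push_neg at h
    have : Iner m1 m2 m3 m4 r = 0 := by unfold Iner; simp [h]
    rw [hI rfl] at this; norm_num at this
  · refine ⟨0, ?_⟩
    rw [gmap0]
    have h0 : 0 ≤ (1 - t) * r 0 := mul_nonneg (by linarith) (hr 0)
    have : 0 < gA t r 0 := by unfold gA; linarith
    exact this.ne'

lemma cont_gA (i : Fin 6) : Continuous (fun p : ℝ × (Fin 6 → ℝ) => gA p.1 p.2 i) := by
  unfold gA; fun_prop

lemma cont_rho : Continuous (fun p : ℝ × (Fin 6 → ℝ) => rho p.1 p.2) := by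
  unfold rho gA
  exact Real.continuous_sqrt.comp (by fun_prop)

lemma cont_nn : Continuous (fun p : ℝ × (Fin 6 → ℝ) => nn p.1 p.2) := by
  unfold nn gA
  exact Real.continuous_sqrt.comp (by fun_prop)

lemma cont_hard (j : Fin 6) (hj : j = 1 ∨ j = 4) :
    ContinuousOn (fun p : ℝ × (Fin 6 → ℝ) => rho p.1 p.2 * gA p.1 p.2 j / nn p.1 p.2)
      (Set.Icc (0:ℝ) 1 ×ˢ Mplus m1 m2 m3 m4) := by
  intro q hq
  by_cases hn : nn q.1 q.2 = 0
  · obtain ⟨hqt, hqr⟩ := hq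
    obtain ⟨ht, h1, h4⟩ := nn_eq_zero hqt.1 hqt.2 hqr.1 hn
    have hrhoq : rho q.1 q.2 = 0 := by
      rw [ht]; exact rho_zero_eq_zero hqr.2.2 h1 h4
    show Filter.Tendsto _ (nhdsWithin q _) (nhds (rho q.1 q.2 * gA q.1 q.2 j / nn q.1 q.2))
    rw [hn, div_zero]
    apply squeeze_zero_norm' (a := fun p : ℝ × (Fin 6 → ℝ) => rho p.1 p.2)
    · apply Filter.eventually_of_mem self_mem_nhdsWithin
      rintro p ⟨hpt, hpr⟩
      have hρ := rho_nonneg p.1 p.2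
      have hg : 0 ≤ gA p.1 p.2 j := gA_nonneg hpt.1 hpt.2 (hpr.1 j)
      have hnn := nn_nonneg p.1 p.2
      rw [Real.norm_eq_abs, abs_of_nonneg (by positivity)]
      by_cases hz : nn p.1 p.2 = 0
      · rw [hz, div_zero]; exact hρ
      · have hnnpos : 0 < nn p.1 p.2 := lt_of_le_of_ne hnn (Ne.symm hz)
        have hgle : gA p.1 p.2 j ≤ nn p.1 p.2 := by
          have : gA p.1 p.2 j = Real.sqrt (gA p.1 p.2 j ^ 2) := (Real.sqrt_sq hg).symm
          rw [this]
          unfold nn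
          apply Real.sqrt_le_sqrt
          rcases hj with h | h <;> subst h <;> nlinarith [sq_nonneg (gA p.1 p.2 1), sq_nonneg (gA p.1 p.2 4)]
        rw [div_le_iff₀ hnnpos]
        calc rho p.1 p.2 * gA p.1 p.2 j ≤ rho p.1 p.2 * nn p.1 p.2 :=
              mul_le_mul_of_nonneg_left hgle hρ
          _ = rho p.1 p.2 * nn p.1 p.2 := rfl
    · have := cont_rho.tendsto q
      rw [hrhoq] at this
      exact this.mono_left nhdsWithin_le_nhds
  · exact (((cont_rho.continuousAt).mul (cont_gA j).continuousAt).div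
      cont_nn.continuousAt hn).continuousWithinAt

end MplusAux
namespace MplusAux

variable {m1 m2 m3 m4 : ℝ}

lemma gmap_contOn :
    ContinuousOn (fun p : ℝ × (Fin 6 → ℝ) => gmap p.1 p.2)
      (Set.Icc (0:ℝ) 1 ×ˢ Mplus m1 m2 m3 m4) := by
  rw [continuousOn_pi]
  intro i
  rcases show i = 0 ∨ i = 1 ∨ i = 2 ∨ i = 3 ∨ i = 4 ∨ i = 5 by omega with
    h | h | h | h | h | h <;> subst h
  · simp only [gmap0]; exact (cont_gA 0).continuousOn
  · simp only [gmap1]; exact cont_hard 1 (Or.inl rfl)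
  · simp only [gmap2]; exact (cont_gA 2).continuousOn
  · simp only [gmap3]; exact (cont_gA 3).continuousOn
  · simp only [gmap4]; exact cont_hard 4 (Or.inr rfl)
  · simp only [gmap5]; exact (cont_gA 5).continuousOn

lemma smap_contOn :
    ContinuousOn (smap m1 m2 m3 m4) {x | 0 < Iner m1 m2 m3 m4 x} := by
  intro x hx
  apply ContinuousAt.continuousWithinAt
  have hs : Real.sqrt (Iner m1 m2 m3 m4 x) ≠ 0 := (Real.sqrt_pos.mpr hx).ne'
  have h1 : ContinuousAt (fun y => (Real.sqrt (Iner m1 m2 m3 m4 y))⁻¹) x :=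
    ((Real.continuous_sqrt.comp iner_continuous).continuousAt).inv₀ hs
  apply continuousAt_pi.mpr
  intro i
  exact h1.mul ((continuous_apply i).continuousAt)

end MplusAux
namespace MplusAux

variable {m1 m2 m3 m4 : ℝ}

lemma gmap_nonneg {t : ℝ} {r : Fin 6 → ℝ} (ht0 : 0 ≤ t) (ht1 : t ≤ 1)
    (hr : ∀ i, 0 ≤ r i) : ∀ i, 0 ≤ gmap t r i := by
  intro i
  unfold gmap
  by_cases h : i = 1 ∨ i = 4 <;> simp only [h, if_true, if_false]
  · exact div_nonneg (mul_nonneg (rho_nonneg t r) (gA_nonneg ht0 ht1 (hr i)))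
      (nn_nonneg t r)
  · exact gA_nonneg ht0 ht1 (hr i)

end MplusAux


open MplusAux in
/-- For any positive masses, the set `M⁺`, with the subspace topology from ℝ⁶,
is contractible (so in particular its Euler characteristic is `1`). -/
theorem Mplus_contractible (m1 m2 m3 m4 : ℝ) (hm1 : 0 < m1) (hm2 : 0 < m2)
    (hm3 : 0 < m3) (hm4 : 0 < m4) :
    ContractibleSpace (Mplus m1 m2 m3 m4) := by
  rw [contractible_iff_id_nullhomotopic]
  have hmem : ∀ (t : ℝ), 0 ≤ t → t ≤ 1 → ∀ r : Fin 6 → ℝ, (∀ i, 0 ≤ r i) → F r = 0 →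
      (t = 0 → Iner m1 m2 m3 m4 r = 1) →
      smap m1 m2 m3 m4 (gmap t r) ∈ Mplus m1 m2 m3 m4 := by
    intro t ht0 ht1 r hr hF hI
    exact smap_mem hm1 hm2 hm3 hm4 (gmap_nonneg ht0 ht1 hr) (F_gmap ht0 ht1 hr hF)
      (iner_gmap_pos hm1 hm2 hm3 hm4 ht0 ht1 hr hF hI)
  have hr0 : ∀ i, 0 ≤ (fun _ : Fin 6 => (0:ℝ)) i := fun _ => le_rfl
  have hF0 : F (fun _ : Fin 6 => (0:ℝ)) = 0 := by unfold F; norm_num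
  refine ⟨⟨smap m1 m2 m3 m4 (gmap 1 (fun _ => 0)),
      hmem 1 zero_le_one le_rfl _ hr0 hF0 (by norm_num)⟩, ⟨?_⟩⟩
  refine
    { toFun := fun p => ⟨smap m1 m2 m3 m4 (gmap (p.1 : ℝ) (p.2 : Fin 6 → ℝ)),
        hmem p.1 p.1.2.1 p.1.2.2 p.2 p.2.2.1 p.2.2.2.2 (fun _ => p.2.2.2.1)⟩
      continuous_toFun := ?_
      map_zero_left := ?_
      map_one_left := ?_ }
  · refine Continuous.subtype_mk ?_ _
    have hmaps : Set.MapsTo (fun p : ℝ × (Fin 6 → ℝ) => gmap p.1 p.2)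
        (Set.Icc (0:ℝ) 1 ×ˢ Mplus m1 m2 m3 m4)
        {x | 0 < Iner m1 m2 m3 m4 x} := by
      rintro p ⟨hpt, hpr⟩
      exact iner_gmap_pos hm1 hm2 hm3 hm4 hpt.1 hpt.2 hpr.1 hpr.2.2
        (fun _ => hpr.2.1)
    have hcomp := (smap_contOn (m1 := m1) (m2 := m2) (m3 := m3) (m4 := m4)).comp
      gmap_contOn hmaps
    have hg : Continuous (fun x : unitInterval × ↥(Mplus m1 m2 m3 m4) =>
        ((x.1 : ℝ), (x.2 : Fin 6 → ℝ))) :=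
      (continuous_subtype_val.comp continuous_fst).prodMk
        (continuous_subtype_val.comp continuous_snd)
    have hc2 : Continuous ((fun p : ℝ × (Fin 6 → ℝ) => smap m1 m2 m3 m4 (gmap p.1 p.2)) ∘
        (fun x : unitInterval × ↥(Mplus m1 m2 m3 m4) => ((x.1 : ℝ), (x.2 : Fin 6 → ℝ)))) :=
      hcomp.comp_continuous hg (fun x => Set.mk_mem_prod x.1.2 x.2.2)
    exact hc2
  · intro x
    apply Subtype.ext
    show smap m1 m2 m3 m4 (gmap ((0 : unitInterval) : ℝ) (x : Fin 6 → ℝ)) = (x : Fin 6 → ℝ)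
    rw [show ((0 : unitInterval) : ℝ) = 0 from rfl, gmap_zero x.2.1 x.2.2.2,
      smap_of_iner_one x.2.2.1]
  · intro x
    apply Subtype.ext
    show smap m1 m2 m3 m4 (gmap ((1 : unitInterval) : ℝ) (x : Fin 6 → ℝ))
      = smap m1 m2 m3 m4 (gmap 1 (fun _ => 0))
    rw [show ((1 : unitInterval) : ℝ) = 1 from rfl]
    rw [gmap_one (x : Fin 6 → ℝ) (fun _ => 0)]
end
end
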